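/- arXiv:2208.10305 — 3 statements merged into one kernel-verified Lean document; each statement's English description precedes it below -/
import Mathlib

section
/- Suppose 0 < β < α ≤ 2, p = α/(α−β), F : ℝ² → [0,1] is measurable, H : ℝ² → [0,1] is measurable, and C₀ > 0 satisfies ∫ F(x)^{β₀} H(x) dx ≤ C₀ 𝔸_α(H) for some β₀ > 0. Then the function 𝓗 = F^{β₀/p} H satisfies 𝔸_β(𝓗) ≤ C₀^{1/p} 𝔸_α(H). -/
open MeasureTheory ENNReal Real

noncomputable section

abbrev Plane := ℝ × ℝ
/-- The set `𝔹(x,R₁,R₂) ⊆ ℝ² × ℝ²`. -/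
def MTBox (x : Plane) (R₁ R₂ : ℝ) : Set (Plane × Plane) :=
  {p | |p.1.1 + p.2.1 - x.1| ≤ R₁ ∧ |p.1.2 + p.2.2 - x.2| ≤ R₂}

/-- `𝔸_γ(H)²`: the infimum of constants `C` with
`∫_{𝔹(x,R₁,R₂)} H(y)H(z) d(y,z) ≤ C (R₁R₂)^γ` for all `x` and `R₁,R₂ ≥ 1`. -/
def Asq (γ : ℝ) (H : Plane → ℝ) : ℝ≥0∞ :=
  sInf {C : ℝ≥0∞ | ∀ (x : Plane) (R₁ R₂ : ℝ), 1 ≤ R₁ → 1 ≤ R₂ →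
    ∫⁻ p in MTBox x R₁ R₂, ENNReal.ofReal (H p.1 * H p.2) ≤
      C * ENNReal.ofReal ((R₁ * R₂) ^ γ)}

/-- `𝔸_γ(H)`, the square root of `Asq γ H`. -/
def Adim (γ : ℝ) (H : Plane → ℝ) : ℝ≥0∞ := Asq γ H ^ ((1 : ℝ) / 2)

private lemma aux_rpow (a b c d s t e : ℝ) (ha : 0 ≤ a) (hb : 0 ≤ b) (hc : 0 ≤ c) (hd : 0 ≤ d)
    (hs : 0 ≤ s) (ht : 0 ≤ t) (hst : s + t = 1) :
    (a ^ e * b * (c ^ e * d)) ^ s * (b * d) ^ t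
      = a ^ (e * s) * b * (c ^ (e * s) * d) := by
  have hb' : b ^ s * b ^ t = b := by
    rw [← Real.rpow_add_of_nonneg hb hs ht, hst, Real.rpow_one]
  have hd' : d ^ s * d ^ t = d := by
    rw [← Real.rpow_add_of_nonneg hd hs ht, hst, Real.rpow_one]
  rw [Real.mul_rpow (mul_nonneg (Real.rpow_nonneg ha _) hb)
        (mul_nonneg (Real.rpow_nonneg hc _) hd),
      Real.mul_rpow (Real.rpow_nonneg ha _) hb, Real.mul_rpow (Real.rpow_nonneg hc _) hd,
      Real.mul_rpow hb hd, ← Real.rpow_mul ha, ← Real.rpow_mul hc]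
  calc a ^ (e * s) * b ^ s * (c ^ (e * s) * d ^ s) * (b ^ t * d ^ t)
      = a ^ (e * s) * c ^ (e * s) * ((b ^ s * b ^ t) * (d ^ s * d ^ t)) := by ring
    _ = a ^ (e * s) * b * (c ^ (e * s) * d) := by rw [hb', hd']; ring

/-- the Hölder bootstrapping step: if `∫ F^{β₀} H ≤ C₀ 𝔸_α(H)` then
`𝓗 = F^{β₀/p} H` with `p = α/(α−β)` satisfies `𝔸_β(𝓗) ≤ C₀^{1/p} 𝔸_α(H)`. -/
theorem stmt2 (α β β₀ C₀ : ℝ) (hβ : 0 < β) (hβα : β < α) (hα2 : α ≤ 2)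
    (hβ₀ : 0 < β₀) (hC₀ : 0 < C₀)
    (F H : Plane → ℝ) (hFm : Measurable F) (hF : ∀ x, 0 ≤ F x ∧ F x ≤ 1)
    (hHm : Measurable H) (hH : ∀ x, 0 ≤ H x ∧ H x ≤ 1)
    (hyp : ∫⁻ x, ENNReal.ofReal (F x ^ β₀ * H x) ≤ ENNReal.ofReal C₀ * Adim α H) :
    Adim β (fun x => F x ^ (β₀ / (α / (α - β))) * H x) ≤
      ENNReal.ofReal C₀ ^ ((α / (α - β))⁻¹) * Adim α H := by
  set p : ℝ := α / (α - β) with hpdef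
  set q : ℝ := α / β with hqdef
  have hα : 0 < α := hβ.trans hβα
  have hαβ : 0 < α - β := sub_pos.2 hβα
  have hp1 : 1 < p := (one_lt_div hαβ).2 (by linarith)
  have hp0 : 0 < p := lt_trans one_pos hp1
  have hq0 : 0 < q := div_pos hα hβ
  have hpq : p.HolderConjugate q := by
    refine Real.holderConjugate_iff.2 ⟨hp1, ?_⟩
    rw [hpdef, hqdef, inv_div, inv_div, ← add_div, sub_add_cancel, div_self hα.ne']
  have h1p : (0:ℝ) ≤ 1 / p := by positivity
  have h1q : (0:ℝ) ≤ 1 / q := by positivity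
  by_cases hA : Asq α H = ⊤
  · have h1 : Adim α H = ⊤ := by
      rw [Adim, hA, ENNReal.top_rpow_of_pos (by norm_num)]
    rw [h1, ENNReal.mul_top]
    · exact le_top
    · rw [Ne, ENNReal.rpow_eq_zero_iff]
      push_neg
      refine ⟨fun h => absurd h ?_, fun h => absurd h ENNReal.ofReal_ne_top⟩
      simp [ENNReal.ofReal_eq_zero, not_le, hC₀]
  -- main case
  have hu : Measurable fun y : Plane => ENNReal.ofReal (F y ^ β₀ * H y) := by fun_prop
  have memb : ∀ (x : Plane) (R₁ R₂ : ℝ), 1 ≤ R₁ → 1 ≤ R₂ →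
      (∫⁻ z in MTBox x R₁ R₂,
          ENNReal.ofReal ((F z.1 ^ (β₀ / p) * H z.1) * (F z.2 ^ (β₀ / p) * H z.2))) ≤
        (ENNReal.ofReal C₀ ^ (2 * p⁻¹) * Asq α H) * ENNReal.ofReal ((R₁ * R₂) ^ β) := by
    intro x R₁ R₂ hR₁ hR₂
    have hRR : (0:ℝ) < R₁ * R₂ := mul_pos (by linarith) (by linarith)
    have hf : Measurable fun z : Plane × Plane =>
        (ENNReal.ofReal (F z.1 ^ β₀ * H z.1) * ENNReal.ofReal (F z.2 ^ β₀ * H z.2)) ^ p⁻¹ := by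
      fun_prop
    have hg : Measurable fun z : Plane × Plane =>
        (ENNReal.ofReal (H z.1) * ENNReal.ofReal (H z.2)) ^ q⁻¹ := by fun_prop
    have hpt : ∀ z : Plane × Plane,
        ENNReal.ofReal ((F z.1 ^ (β₀ / p) * H z.1) * (F z.2 ^ (β₀ / p) * H z.2))
          = (ENNReal.ofReal (F z.1 ^ β₀ * H z.1) * ENNReal.ofReal (F z.2 ^ β₀ * H z.2)) ^ p⁻¹
            * (ENNReal.ofReal (H z.1) * ENNReal.ofReal (H z.2)) ^ q⁻¹ := by
      intro z
      obtain ⟨hF1, -⟩ := hF z.1; obtain ⟨hF2, -⟩ := hF z.2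
      obtain ⟨hH1, -⟩ := hH z.1; obtain ⟨hH2, -⟩ := hH z.2
      have h01 : 0 ≤ F z.1 ^ β₀ * H z.1 := mul_nonneg (Real.rpow_nonneg hF1 _) hH1
      have h02 : 0 ≤ F z.2 ^ β₀ * H z.2 := mul_nonneg (Real.rpow_nonneg hF2 _) hH2
      rw [← ENNReal.ofReal_mul h01, ← ENNReal.ofReal_mul hH1,
        ENNReal.ofReal_rpow_of_nonneg (mul_nonneg h01 h02) (inv_nonneg.2 hp0.le),
        ENNReal.ofReal_rpow_of_nonneg (mul_nonneg hH1 hH2) (inv_nonneg.2 hq0.le),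
        ← ENNReal.ofReal_mul (Real.rpow_nonneg (mul_nonneg h01 h02) _)]
      congr 1
      rw [aux_rpow _ _ _ _ _ _ β₀ hF1 hH1 hF2 hH2 (inv_nonneg.2 hp0.le) (inv_nonneg.2 hq0.le)
        hpq.inv_add_inv_eq_one, div_eq_mul_inv]
    have hAd : Adim α H * Adim α H = Asq α H := by
      rw [Adim, ← ENNReal.rpow_add_of_nonneg _ _ (by norm_num) (by norm_num)]
      norm_num
    have h1 : (∫⁻ z in MTBox x R₁ R₂,
        ENNReal.ofReal (F z.1 ^ β₀ * H z.1) * ENNReal.ofReal (F z.2 ^ β₀ * H z.2)) ≤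
        ENNReal.ofReal C₀ ^ (2:ℝ) * Asq α H := by
      calc (∫⁻ z in MTBox x R₁ R₂,
            ENNReal.ofReal (F z.1 ^ β₀ * H z.1) * ENNReal.ofReal (F z.2 ^ β₀ * H z.2))
          ≤ ∫⁻ z : Plane × Plane,
            ENNReal.ofReal (F z.1 ^ β₀ * H z.1) * ENNReal.ofReal (F z.2 ^ β₀ * H z.2) :=
            setLIntegral_le_lintegral _ _
        _ = (∫⁻ y, ENNReal.ofReal (F y ^ β₀ * H y)) * ∫⁻ y, ENNReal.ofReal (F y ^ β₀ * H y) := by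
            rw [MeasureTheory.Measure.volume_eq_prod]
            exact lintegral_prod_mul hu.aemeasurable hu.aemeasurable
        _ ≤ (ENNReal.ofReal C₀ * Adim α H) * (ENNReal.ofReal C₀ * Adim α H) :=
            mul_le_mul' hyp hyp
        _ = (ENNReal.ofReal C₀ * ENNReal.ofReal C₀) * (Adim α H * Adim α H) := by ring
        _ = ENNReal.ofReal C₀ ^ (2:ℝ) * Asq α H := by rw [hAd, ENNReal.rpow_two, sq]
    have h2 : (∫⁻ z in MTBox x R₁ R₂, ENNReal.ofReal (H z.1) * ENNReal.ofReal (H z.2)) ≤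
        Asq α H * ENNReal.ofReal ((R₁ * R₂) ^ α) := by
      have hvv : (∫⁻ z in MTBox x R₁ R₂, ENNReal.ofReal (H z.1) * ENNReal.ofReal (H z.2))
          = ∫⁻ z in MTBox x R₁ R₂, ENNReal.ofReal (H z.1 * H z.2) :=
        lintegral_congr fun z => (ENNReal.ofReal_mul (hH z.1).1).symm
      rw [hvv]
      have hr0 : ENNReal.ofReal ((R₁ * R₂) ^ α) ≠ 0 := by
        rw [Ne, ENNReal.ofReal_eq_zero, not_le]
        exact Real.rpow_pos_of_pos hRR α
      have hrt : ENNReal.ofReal ((R₁ * R₂) ^ α) ≠ ⊤ := ENNReal.ofReal_ne_top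
      rw [← ENNReal.div_le_iff_le_mul (Or.inl hr0) (Or.inl hrt), Asq]
      refine le_sInf fun C hC => ?_
      rw [ENNReal.div_le_iff_le_mul (Or.inl hr0) (Or.inl hrt)]
      exact hC x R₁ R₂ hR₁ hR₂
    have hAA : Asq α H ^ ((1:ℝ)/p) * Asq α H ^ ((1:ℝ)/q) = Asq α H := by
      rw [← ENNReal.rpow_add_of_nonneg _ _ h1p h1q,
        show (1:ℝ)/p + 1/q = 1 by rw [one_div, one_div]; exact hpq.inv_add_inv_eq_one,
        ENNReal.rpow_one]
    have hrw : (ENNReal.ofReal ((R₁ * R₂) ^ α)) ^ ((1:ℝ)/q) = ENNReal.ofReal ((R₁ * R₂) ^ β) := by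
      rw [ENNReal.ofReal_rpow_of_nonneg (Real.rpow_nonneg hRR.le α) h1q,
        ← Real.rpow_mul hRR.le,
        show α * (1/q) = β by rw [hqdef]; field_simp]
    calc (∫⁻ z in MTBox x R₁ R₂,
          ENNReal.ofReal ((F z.1 ^ (β₀ / p) * H z.1) * (F z.2 ^ (β₀ / p) * H z.2)))
        = ∫⁻ z in MTBox x R₁ R₂,
            (ENNReal.ofReal (F z.1 ^ β₀ * H z.1) * ENNReal.ofReal (F z.2 ^ β₀ * H z.2)) ^ p⁻¹
            * (ENNReal.ofReal (H z.1) * ENNReal.ofReal (H z.2)) ^ q⁻¹ :=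
          lintegral_congr fun z => hpt z
      _ ≤ (∫⁻ z in MTBox x R₁ R₂,
            ENNReal.ofReal (F z.1 ^ β₀ * H z.1) * ENNReal.ofReal (F z.2 ^ β₀ * H z.2)) ^ ((1:ℝ)/p)
          * (∫⁻ z in MTBox x R₁ R₂,
            ENNReal.ofReal (H z.1) * ENNReal.ofReal (H z.2)) ^ ((1:ℝ)/q) := by
          have := ENNReal.lintegral_mul_le_Lp_mul_Lq (volume.restrict (MTBox x R₁ R₂)) hpq
            hf.aemeasurable hg.aemeasurable
          simp only [Pi.mul_apply, ← ENNReal.rpow_mul, inv_mul_cancel₀ hp0.ne',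
            inv_mul_cancel₀ hq0.ne', ENNReal.rpow_one] at this
          exact this
      _ ≤ (ENNReal.ofReal C₀ ^ (2:ℝ) * Asq α H) ^ ((1:ℝ)/p)
          * (Asq α H * ENNReal.ofReal ((R₁ * R₂) ^ α)) ^ ((1:ℝ)/q) :=
          mul_le_mul' (ENNReal.rpow_le_rpow h1 h1p) (ENNReal.rpow_le_rpow h2 h1q)
      _ = (ENNReal.ofReal C₀ ^ (2:ℝ)) ^ ((1:ℝ)/p)
          * ((Asq α H ^ ((1:ℝ)/p) * Asq α H ^ ((1:ℝ)/q))
            * (ENNReal.ofReal ((R₁ * R₂) ^ α)) ^ ((1:ℝ)/q)) := by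
          rw [ENNReal.mul_rpow_of_nonneg _ _ h1p, ENNReal.mul_rpow_of_nonneg _ _ h1q]; ring
      _ = (ENNReal.ofReal C₀ ^ (2 * p⁻¹) * Asq α H) * ENNReal.ofReal ((R₁ * R₂) ^ β) := by
          rw [← ENNReal.rpow_mul, hAA, hrw, show (2:ℝ) * (1/p) = 2 * p⁻¹ by rw [one_div]]
          ring
  have hsq : Asq β (fun x => F x ^ (β₀ / p) * H x)
      ≤ ENNReal.ofReal C₀ ^ (2 * p⁻¹) * Asq α H := sInf_le memb
  rw [Adim, Adim]
  calc Asq β (fun x => F x ^ (β₀ / p) * H x) ^ ((1:ℝ)/2)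
      ≤ (ENNReal.ofReal C₀ ^ (2 * p⁻¹) * Asq α H) ^ ((1:ℝ)/2) :=
        ENNReal.rpow_le_rpow hsq (by norm_num)
    _ = ENNReal.ofReal C₀ ^ p⁻¹ * Asq α H ^ ((1:ℝ)/2) := by
        rw [ENNReal.mul_rpow_of_nonneg _ _ (by norm_num : (0:ℝ) ≤ 1/2), ← ENNReal.rpow_mul,
          show (2 * p⁻¹) * ((1:ℝ)/2) = p⁻¹ by ring]
end
end

section
/- Suppose 0 < β < α ≤ 2. Then 𝕄F(α) ≤ 𝕄F(β) for all non-negative Lebesgue measurable functions F on ℝ², where 𝕄F(γ) = (sup_H (1/𝔸_γ(H)) ∫ F(x)^γ H(x) dx)^{1/γ} with the supremum over all measurable H : ℝ² → [0,1] with 0 < 𝔸_γ(H) < ∞. -/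
open MeasureTheory ENNReal Real

noncomputable section

/-- The dimensional maximal function
`𝕄F(γ) = (sup_H 𝔸_γ(H)⁻¹ ∫ F^γ H dx)^{1/γ}`, the sup over measurable
`H : ℝ² → [0,1]` with `0 < 𝔸_γ(H) < ∞`. -/
def MMax (γ : ℝ) (F : Plane → ℝ) : ℝ≥0∞ :=
  (⨆ H ∈ {H : Plane → ℝ | Measurable H ∧ (∀ x, 0 ≤ H x ∧ H x ≤ 1) ∧
      0 < Adim γ H ∧ Adim γ H < ⊤},
    (Adim γ H)⁻¹ * ∫⁻ x, ENNReal.ofReal (F x ^ γ * H x)) ^ (1 / γ)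

section Aux

/-- The box is a measurable set. -/
lemma MTBox_measurableSet (x : Plane) (R₁ R₂ : ℝ) : MeasurableSet (MTBox x R₁ R₂) := by
  have h1 : Measurable fun p : Plane × Plane => |p.1.1 + p.2.1 - x.1| :=
    ((measurable_fst.fst.add measurable_snd.fst).sub measurable_const).abs
  have h2 : Measurable fun p : Plane × Plane => |p.1.2 + p.2.2 - x.2| :=
    ((measurable_fst.snd.add measurable_snd.snd).sub measurable_const).abs
  have : MTBox x R₁ R₂ = {p | |p.1.1 + p.2.1 - x.1| ≤ R₁} ∩ {p | |p.1.2 + p.2.2 - x.2| ≤ R₂} := by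
    ext p; simp [MTBox, Set.mem_setOf_eq, Set.mem_inter_iff]
  rw [this]
  exact (measurableSet_le h1 measurable_const).inter (measurableSet_le h2 measurable_const)

lemma one_le_boxweight {γ R₁ R₂ : ℝ} (hγ : 0 ≤ γ) (h1 : 1 ≤ R₁) (h2 : 1 ≤ R₂) :
    1 ≤ ENNReal.ofReal ((R₁ * R₂) ^ γ) := by
  rw [ENNReal.one_le_ofReal]
  exact Real.one_le_rpow (by nlinarith) hγ

lemma boxweight_ne_zero {γ R₁ R₂ : ℝ} (h1 : 1 ≤ R₁) (h2 : 1 ≤ R₂) :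
    ENNReal.ofReal ((R₁ * R₂) ^ γ) ≠ 0 := by
  rw [Ne, ENNReal.ofReal_eq_zero, not_le]
  exact Real.rpow_pos_of_pos (by nlinarith) γ

/-- Any box integral is bounded by `Asq γ H` times the box weight. -/
lemma box_le_Asq (γ : ℝ) (H : Plane → ℝ) (x : Plane) {R₁ R₂ : ℝ} (h1 : 1 ≤ R₁) (h2 : 1 ≤ R₂) :
    ∫⁻ p in MTBox x R₁ R₂, ENNReal.ofReal (H p.1 * H p.2)
      ≤ Asq γ H * ENNReal.ofReal ((R₁ * R₂) ^ γ) := by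
  set B := ∫⁻ p in MTBox x R₁ R₂, ENNReal.ofReal (H p.1 * H p.2) with hB
  set k := ENNReal.ofReal ((R₁ * R₂) ^ γ) with hk
  have hk0 : k ≠ 0 := boxweight_ne_zero h1 h2
  have hktop : k ≠ ⊤ := ENNReal.ofReal_ne_top
  have hdiv : B / k ≤ Asq γ H :=
    le_sInf fun C hC => ENNReal.div_le_of_le_mul (hC x R₁ R₂ h1 h2)
  calc B = B / k * k := (ENNReal.div_mul_cancel hk0 hktop).symm
  _ ≤ Asq γ H * k := mul_le_mul_left hdiv k

/-- To bound `Asq` from above it suffices to bound all box integrals. -/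
lemma Asq_le_of_forall {γ : ℝ} {H : Plane → ℝ} {D : ℝ≥0∞}
    (h : ∀ (x : Plane) (R₁ R₂ : ℝ), 1 ≤ R₁ → 1 ≤ R₂ →
      ∫⁻ p in MTBox x R₁ R₂, ENNReal.ofReal (H p.1 * H p.2) ≤
        D * ENNReal.ofReal ((R₁ * R₂) ^ γ)) : Asq γ H ≤ D := sInf_le h

/-- If a nonneg function vanishes off a box, the full integral equals the box integral. -/
lemma lintegral_eq_box {f : Plane × Plane → ℝ≥0∞} {c : Plane} {R₁ R₂ : ℝ}
    (hf : ∀ p, p ∉ MTBox c R₁ R₂ → f p = 0) :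
    ∫⁻ p, f p = ∫⁻ p in MTBox c R₁ R₂, f p := by
  conv_lhs => rw [show f = (MTBox c R₁ R₂).indicator f from funext fun p => by
    by_cases hp : p ∈ MTBox c R₁ R₂ <;> simp [Set.indicator, hp, hf p]]
  rw [lintegral_indicator (MTBox_measurableSet c R₁ R₂)]

/-- Tonelli for split products. -/
lemma lintegral_pair (u v : Plane → ℝ≥0∞) (hu : Measurable u) (hv : Measurable v) :
    ∫⁻ p : Plane × Plane, u p.1 * v p.2 = (∫⁻ x, u x) * ∫⁻ x, v x := by
  rw [MeasureTheory.Measure.volume_eq_prod]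
  exact lintegral_prod_mul hu.aemeasurable hv.aemeasurable

end Aux

section MMaxAux

lemma le_MMax_pow {γ : ℝ} (hγ : 0 < γ) (F H : Plane → ℝ)
    (hH : H ∈ {H : Plane → ℝ | Measurable H ∧ (∀ x, 0 ≤ H x ∧ H x ≤ 1) ∧
      0 < Adim γ H ∧ Adim γ H < ⊤}) :
    (Adim γ H)⁻¹ * ∫⁻ x, ENNReal.ofReal (F x ^ γ * H x) ≤ MMax γ F ^ γ := by
  rw [MMax, ← ENNReal.rpow_mul, one_div, inv_mul_cancel₀ hγ.ne', ENNReal.rpow_one]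
  exact le_iSup₂ (f := fun H _ =>
    (Adim γ H)⁻¹ * ∫⁻ x, ENNReal.ofReal (F x ^ γ * H x)) H hH

lemma MMax_le {γ : ℝ} (hγ : 0 < γ) (F : Plane → ℝ) (X : ℝ≥0∞)
    (h : ∀ H : Plane → ℝ, Measurable H → (∀ x, 0 ≤ H x ∧ H x ≤ 1) → 0 < Adim γ H →
      Adim γ H < ⊤ → (∫⁻ x, ENNReal.ofReal (F x ^ γ * H x)) ≤ X ^ γ * Adim γ H) :
    MMax γ F ≤ X := by
  rw [MMax]
  have hsup : (⨆ H ∈ {H : Plane → ℝ | Measurable H ∧ (∀ x, 0 ≤ H x ∧ H x ≤ 1) ∧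
      0 < Adim γ H ∧ Adim γ H < ⊤},
      (Adim γ H)⁻¹ * ∫⁻ x, ENNReal.ofReal (F x ^ γ * H x)) ≤ X ^ γ := by
    refine iSup₂_le fun H hH => ?_
    obtain ⟨h1, h2, h3, h4⟩ := hH
    rw [ENNReal.inv_mul_le_iff h3.ne' h4.ne]
    exact (h H h1 h2 h3 h4).trans (le_of_eq (mul_comm _ _))
  refine le_trans (ENNReal.rpow_le_rpow hsup (by positivity)) (le_of_eq ?_)
  rw [← ENNReal.rpow_mul, mul_one_div_cancel hγ.ne', ENNReal.rpow_one]

end MMaxAux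

section EsssupLemma

/-- If `{F > l}` has positive measure then `ofReal l ≤ MMax β F`
(tested with the indicator of a positive-measure piece inside a unit square). -/
lemma ofReal_le_MMax {β : ℝ} (hβ : 0 < β) {F : Plane → ℝ} (hFm : Measurable F)
    {l : ℝ} (hl : 0 < l) (hpos : volume {x : Plane | l < F x} ≠ 0) :
    ENNReal.ofReal l ≤ MMax β F := by
  classical
  set S : Set Plane := {x | l < F x} with hS
  have hSm : MeasurableSet S := measurableSet_lt measurable_const hFm
  have hcover : S ⊆ ⋃ z : ℤ × ℤ,
      S ∩ ((Set.Ico (z.1 : ℝ) (z.1 + 1)) ×ˢ (Set.Ico (z.2 : ℝ) (z.2 + 1))) := by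
    intro x hx
    exact Set.mem_iUnion.2 ⟨(⌊x.1⌋, ⌊x.2⌋), hx, ⟨Int.floor_le _, Int.lt_floor_add_one _⟩,
      ⟨Int.floor_le _, Int.lt_floor_add_one _⟩⟩
  have hex : ∃ z : ℤ × ℤ, volume
      (S ∩ ((Set.Ico (z.1 : ℝ) (z.1 + 1)) ×ˢ (Set.Ico (z.2 : ℝ) (z.2 + 1)))) ≠ 0 := by
    by_contra hcon
    push_neg at hcon
    exact hpos (measure_mono_null hcover (measure_iUnion_null fun z => hcon z))
  obtain ⟨z, hz⟩ := hex
  set Q : Set Plane := (Set.Ico (z.1 : ℝ) (z.1 + 1)) ×ˢ (Set.Ico (z.2 : ℝ) (z.2 + 1)) with hQ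
  have hQm : MeasurableSet Q := measurableSet_Ico.prod measurableSet_Ico
  set S₀ : Set Plane := S ∩ Q with hS₀
  have hS₀m : MeasurableSet S₀ := hSm.inter hQm
  set m := volume S₀ with hm
  have hm0 : m ≠ 0 := hz
  have hmle : m ≤ 1 := by
    calc m ≤ volume Q := measure_mono Set.inter_subset_right
    _ = 1 := by
        rw [hQ, MeasureTheory.Measure.volume_eq_prod, Measure.prod_prod,
          Real.volume_Ico, Real.volume_Ico]
        norm_num
  have hmtop : m ≠ ⊤ := (lt_of_le_of_lt hmle (by norm_num)).ne
  set H' : Plane → ℝ := S₀.indicator (fun _ => (1:ℝ)) with hH'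
  have hH'm : Measurable H' := measurable_const.indicator hS₀m
  have hH'b : ∀ x, 0 ≤ H' x ∧ H' x ≤ 1 := fun x => by
    by_cases hx : x ∈ S₀ <;> simp [hH', Set.indicator, hx]
  have hpair : ∀ p : Plane × Plane, ENNReal.ofReal (H' p.1 * H' p.2)
      = (S₀ ×ˢ S₀).indicator (fun _ => (1:ℝ≥0∞)) p := by
    intro p
    by_cases h1 : p.1 ∈ S₀ <;> by_cases h2 : p.2 ∈ S₀ <;>
      simp [hH', Set.indicator, h1, h2, Set.mem_prod]
  have hS₀S₀ : volume (S₀ ×ˢ S₀) = m * m := by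
    rw [MeasureTheory.Measure.volume_eq_prod, Measure.prod_prod]
  -- upper bound for Asq
  have hAsq_le : Asq β H' ≤ m * m := by
    refine Asq_le_of_forall fun x R₁ R₂ h1 h2 => ?_
    have hb : ∫⁻ p in MTBox x R₁ R₂, ENNReal.ofReal (H' p.1 * H' p.2) ≤ m * m := by
      calc ∫⁻ p in MTBox x R₁ R₂, ENNReal.ofReal (H' p.1 * H' p.2)
          ≤ ∫⁻ p : Plane × Plane, ENNReal.ofReal (H' p.1 * H' p.2) :=
            setLIntegral_le_lintegral _ _
      _ = m * m := by
          simp_rw [hpair]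
          rw [lintegral_indicator_const (hS₀m.prod hS₀m), one_mul, hS₀S₀]
    exact hb.trans (le_mul_of_one_le_right zero_le (one_le_boxweight hβ.le h1 h2))
  -- the product set sits inside a single unit box
  have hsub : S₀ ×ˢ S₀ ⊆ MTBox (2*(z.1:ℝ)+1, 2*(z.2:ℝ)+1) 1 1 := by
    rintro ⟨p₁, p₂⟩ ⟨hp₁, hp₂⟩
    have h₁ := hp₁.2.1; have h₂ := hp₁.2.2; have h₃ := hp₂.2.1; have h₄ := hp₂.2.2
    refine ⟨?_, ?_⟩
    · show |p₁.1 + p₂.1 - (2*(z.1:ℝ)+1)| ≤ 1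
      rw [abs_le]
      constructor <;> [linarith [h₁.1, h₃.1]; linarith [h₁.2, h₃.2]]
    · show |p₁.2 + p₂.2 - (2*(z.2:ℝ)+1)| ≤ 1
      rw [abs_le]
      constructor <;> [linarith [h₂.1, h₄.1]; linarith [h₂.2, h₄.2]]
  -- lower bound for Asq
  have hAsq_ge : m * m ≤ Asq β H' := by
    refine le_sInf fun C hC => ?_
    have hbox := hC (2*(z.1:ℝ)+1, 2*(z.2:ℝ)+1) 1 1 le_rfl le_rfl
    have hBval : ∫⁻ p in MTBox (2*(z.1:ℝ)+1, 2*(z.2:ℝ)+1) 1 1,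
        ENNReal.ofReal (H' p.1 * H' p.2) = m * m := by
      simp_rw [hpair]
      rw [lintegral_indicator_const (hS₀m.prod hS₀m), one_mul,
        Measure.restrict_apply (hS₀m.prod hS₀m),
        Set.inter_eq_self_of_subset_left hsub, hS₀S₀]
    rw [hBval] at hbox
    calc m * m ≤ C * ENNReal.ofReal ((1 * 1 : ℝ) ^ β) := hbox
    _ = C := by norm_num
  have hAsqEq : Asq β H' = m * m := le_antisymm hAsq_le hAsq_ge
  have hAdim : Adim β H' = m := by
    rw [Adim, hAsqEq, show m * m = m ^ (2:ℝ) by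
      rw [show (2:ℝ) = 1 + 1 by norm_num, ENNReal.rpow_add 1 1 hm0 hmtop, ENNReal.rpow_one],
      ← ENNReal.rpow_mul]
    norm_num
  -- membership in the admissible class
  have hmem : H' ∈ {H : Plane → ℝ | Measurable H ∧ (∀ x, 0 ≤ H x ∧ H x ≤ 1) ∧
      0 < Adim β H ∧ Adim β H < ⊤} := by
    refine ⟨hH'm, hH'b, ?_, ?_⟩
    · rw [hAdim]; exact pos_iff_ne_zero.2 hm0
    · rw [hAdim]; exact lt_top_iff_ne_top.2 hmtop
  -- lower bound for the integral
  have hint : ENNReal.ofReal (l ^ β) * m ≤ ∫⁻ x, ENNReal.ofReal (F x ^ β * H' x) := by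
    have hptwise : ∀ x, S₀.indicator (fun _ => ENNReal.ofReal (l ^ β)) x
        ≤ ENNReal.ofReal (F x ^ β * H' x) := fun x => by
      by_cases hx : x ∈ S₀
      · have hH'x : H' x = 1 := by simp [hH', Set.indicator, hx]
        have hFx : l ≤ F x := le_of_lt hx.1
        have hpow : l ^ β ≤ F x ^ β := Real.rpow_le_rpow hl.le hFx hβ.le
        simp only [Set.indicator, hx, if_true, hH'x, mul_one]
        exact ENNReal.ofReal_le_ofReal hpow
      · simp [Set.indicator, hx]
    calc ENNReal.ofReal (l ^ β) * m
        = ∫⁻ x, S₀.indicator (fun _ => ENNReal.ofReal (l ^ β)) x :=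
          (lintegral_indicator_const hS₀m _).symm
    _ ≤ _ := lintegral_mono hptwise
  -- ratio bound
  have hratio : ENNReal.ofReal (l ^ β) ≤
      (Adim β H')⁻¹ * ∫⁻ x, ENNReal.ofReal (F x ^ β * H' x) := by
    rw [hAdim]
    calc ENNReal.ofReal (l ^ β) = m⁻¹ * (ENNReal.ofReal (l ^ β) * m) := by
          rw [mul_comm (ENNReal.ofReal (l ^ β)) m, ← mul_assoc,
            ENNReal.inv_mul_cancel hm0 hmtop, one_mul]
    _ ≤ m⁻¹ * ∫⁻ x, ENNReal.ofReal (F x ^ β * H' x) := mul_le_mul_right hint _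
  have hfin : ENNReal.ofReal (l ^ β) ≤ MMax β F ^ β :=
    hratio.trans (le_MMax_pow hβ F H' hmem)
  -- undo the power β
  have := ENNReal.rpow_le_rpow hfin (by positivity : (0:ℝ) ≤ 1/β)
  rwa [ENNReal.ofReal_rpow_of_pos (Real.rpow_pos_of_pos hl β),
    ← Real.rpow_mul hl.le, mul_one_div_cancel hβ.ne', Real.rpow_one,
    ← ENNReal.rpow_mul, mul_one_div_cancel hβ.ne', ENNReal.rpow_one] at this

end EsssupLemma

section AE

lemma meas_rpow {X : Type*} [MeasurableSpace X] {f : X → ℝ} (hf : Measurable f)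
    {c : ℝ} (hc : 0 ≤ c) : Measurable fun x => f x ^ c :=
  (Real.continuous_rpow_const hc).measurable.comp hf

/-- Almost everywhere, `F` is bounded by `MMax β F`. -/
lemma ae_le_MMax {β : ℝ} (hβ : 0 < β) {F : Plane → ℝ} (hFm : Measurable F)
    (htop : MMax β F ≠ ⊤) : ∀ᵐ x : Plane, F x ≤ (MMax β F).toReal := by
  set Mr := (MMax β F).toReal with hMr
  have hMr0 : 0 ≤ Mr := ENNReal.toReal_nonneg
  have hnull : ∀ n : ℕ, volume {x : Plane | Mr + 1/(n+1) < F x} = 0 := by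
    intro n
    by_contra hne
    have hl : 0 < Mr + 1/(n+1:ℝ) := by positivity
    have hmm := ofReal_le_MMax hβ hFm hl hne
    rw [← ENNReal.ofReal_toReal htop] at hmm
    have hle := (ENNReal.ofReal_le_ofReal_iff hMr0).1 hmm
    have hp : (0:ℝ) < 1/(n+1:ℝ) := by positivity
    linarith
  have hsub : {x : Plane | Mr < F x} ⊆ ⋃ n : ℕ, {x : Plane | Mr + 1/(n+1) < F x} := by
    intro x hx
    have hd : 0 < F x - Mr := by simpa [sub_pos] using hx
    obtain ⟨n, hn⟩ := exists_nat_gt (1/(F x - Mr))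
    refine Set.mem_iUnion.2 ⟨n, ?_⟩
    have h1 : 1/(F x - Mr) < (n:ℝ) + 1 := lt_trans hn (lt_add_one _)
    have h2 : 1 < (F x - Mr) * ((n:ℝ)+1) := by
      rw [div_lt_iff₀ hd] at h1; linarith
    have h3 : 1/((n:ℝ)+1) < F x - Mr := by
      rw [div_lt_iff₀ (by positivity : (0:ℝ) < (n:ℝ)+1)]; linarith
    show Mr + 1/((n:ℝ)+1) < F x
    linarith
  have hz : volume {x : Plane | Mr < F x} = 0 :=
    measure_mono_null hsub (measure_iUnion_null hnull)
  rw [ae_iff]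
  simpa [not_le] using hz

end AE

section Main

/-- The key self-improving bound: for admissible `H` (for exponent `α`), with
`G = min(F/M, 1)` and `H` truncated to the square `[-N,N]²`, the integral
`J = ∫ G^α H_N` satisfies `J ≤ 𝔸_α(H)`. -/
lemma key_J_le {α β : ℝ} (hβ : 0 < β) (hβα : β < α)
    {F : Plane → ℝ} (hFm : Measurable F) (hF0 : ∀ x, 0 ≤ F x)
    (hM0 : MMax β F ≠ 0) (hMtop : MMax β F ≠ ⊤)
    {H : Plane → ℝ} (hHm : Measurable H) (hHb : ∀ x, 0 ≤ H x ∧ H x ≤ 1)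
    (N : ℕ) :
    ∫⁻ x, ENNReal.ofReal ((min (F x / (MMax β F).toReal) 1) ^ α *
      ((Set.Icc (-(N:ℝ)) (N:ℝ) ×ˢ Set.Icc (-(N:ℝ)) (N:ℝ)).indicator H) x) ≤ Adim α H := by
  classical
  have hα : 0 < α := hβ.trans hβα
  have hs : 0 < α - β := by linarith
  set Mr := (MMax β F).toReal with hMrdef
  have hMr : 0 < Mr := ENNReal.toReal_pos hM0 hMtop
  set G : Plane → ℝ := fun x => min (F x / Mr) 1 with hGdef
  have hGm : Measurable G := (hFm.div_const Mr).min measurable_const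
  have hG0 : ∀ x, 0 ≤ G x := fun x => le_min (div_nonneg (hF0 x) hMr.le) one_pos.le
  have hG1 : ∀ x, G x ≤ 1 := fun x => min_le_right _ _
  set QN : Set Plane := Set.Icc (-(N:ℝ)) (N:ℝ) ×ˢ Set.Icc (-(N:ℝ)) (N:ℝ) with hQNdef
  have hQNm : MeasurableSet QN := measurableSet_Icc.prod measurableSet_Icc
  set HN : Plane → ℝ := QN.indicator H with hHNdef
  have hHNm : Measurable HN := hHm.indicator hQNm
  have hHN0 : ∀ x, 0 ≤ HN x := fun x => by
    by_cases hx : x ∈ QN <;> simp [hHNdef, Set.indicator, hx, (hHb x).1]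
  have hHN1 : ∀ x, HN x ≤ 1 := fun x => by
    by_cases hx : x ∈ QN <;> simp [hHNdef, Set.indicator, hx, (hHb x).2]
  have hHNH : ∀ x, HN x ≤ H x := fun x => by
    by_cases hx : x ∈ QN <;> simp [hHNdef, Set.indicator, hx, (hHb x).1]
  have hHNout : ∀ x, x ∉ QN → HN x = 0 := fun x hx => by simp [hHNdef, Set.indicator, hx]
  set u : Plane → ℝ := fun x => G x ^ α * HN x with hudef
  have hum : Measurable u := (meas_rpow hGm hα.le).mul hHNm
  have hu0 : ∀ x, 0 ≤ u x := fun x => mul_nonneg (Real.rpow_nonneg (hG0 x) α) (hHN0 x)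
  set K : Plane → ℝ := fun x => G x ^ (α - β) * HN x with hKdef
  have hKm : Measurable K := (meas_rpow hGm hs.le).mul hHNm
  have hK0 : ∀ x, 0 ≤ K x := fun x => mul_nonneg (Real.rpow_nonneg (hG0 x) _) (hHN0 x)
  have hK1 : ∀ x, K x ≤ 1 := fun x =>
    mul_le_one₀ (Real.rpow_le_one (hG0 x) (hG1 x) hs.le) (hHN0 x) (hHN1 x)
  set J : ℝ≥0∞ := ∫⁻ x, ENNReal.ofReal (u x) with hJdef
  show J ≤ Adim α H
  -- finiteness of J
  have hvolQN : volume QN ≠ ⊤ := by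
    rw [hQNdef, MeasureTheory.Measure.volume_eq_prod, Measure.prod_prod]
    exact (ENNReal.mul_lt_top (measure_Icc_lt_top) (measure_Icc_lt_top)).ne
  have hJtop : J ≠ ⊤ := by
    have hle : ∀ x, ENNReal.ofReal (u x) ≤ QN.indicator (fun _ => (1:ℝ≥0∞)) x := by
      intro x
      by_cases hx : x ∈ QN
      · simp only [Set.indicator, hx, if_true]
        exact ENNReal.ofReal_le_one.2
          (mul_le_one₀ (Real.rpow_le_one (hG0 x) (hG1 x) hα.le) (hHN0 x) (hHN1 x))
      · simp [Set.indicator, hx, hudef, hHNout x hx]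
    have : J ≤ volume QN := by
      calc J ≤ ∫⁻ x, QN.indicator (fun _ => (1:ℝ≥0∞)) x := lintegral_mono hle
      _ = volume QN := by rw [lintegral_indicator_const hQNm, one_mul]
    exact (lt_of_le_of_lt this (lt_top_iff_ne_top.2 hvolQN)).ne
  -- J in terms of K
  have hJK : J = ∫⁻ x, ENNReal.ofReal (G x ^ β * K x) := by
    refine lintegral_congr fun x => ?_
    congr 1
    rw [hKdef]
    show G x ^ α * HN x = G x ^ β * (G x ^ (α - β) * HN x)
    rw [← mul_assoc, ← Real.rpow_add' (hG0 x) (by linarith : β + (α - β) ≠ 0),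
      show β + (α - β) = α by ring]
  -- trivial cases
  by_cases hJ0 : J = 0
  · rw [hJ0]; exact zero_le
  by_cases hAtop : Asq α H = ⊤
  · rw [Adim, hAtop, ENNReal.top_rpow_of_pos (by norm_num)]; exact le_top
  -- the support of K is inside one big box
  set RN : ℝ := 2*(N:ℝ)+1 with hRNdef
  have hRN : 1 ≤ RN := by
    rw [hRNdef]
    have : (0:ℝ) ≤ (N:ℝ) := Nat.cast_nonneg N
    linarith
  have hKbox : ∀ p : Plane × Plane, p ∉ MTBox ((0:ℝ),(0:ℝ)) RN RN →
      ENNReal.ofReal (K p.1 * K p.2) = 0 := by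
    intro p hp
    by_contra hne
    apply hp
    have hKpos : 0 < K p.1 * K p.2 := by
      by_contra hnp
      exact hne (ENNReal.ofReal_eq_zero.2 (le_of_not_gt hnp))
    have h1 : K p.1 ≠ 0 := fun h => by simp [h] at hKpos
    have h2 : K p.2 ≠ 0 := fun h => by simp [h] at hKpos
    have hq1 : p.1 ∈ QN := by
      by_contra hq; exact h1 (by simp [hKdef, hHNout _ hq])
    have hq2 : p.2 ∈ QN := by
      by_contra hq; exact h2 (by simp [hKdef, hHNout _ hq])
    obtain ⟨⟨ha1, ha2⟩, hb1, hb2⟩ := hq1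
    obtain ⟨⟨hc1, hc2⟩, hd1, hd2⟩ := hq2
    constructor
    · show |p.1.1 + p.2.1 - (0:ℝ)| ≤ RN
      rw [abs_le, hRNdef]; constructor <;> [linarith; linarith]
    · show |p.1.2 + p.2.2 - (0:ℝ)| ≤ RN
      rw [abs_le, hRNdef]; constructor <;> [linarith; linarith]
  -- pair identities
  have hKpair : ∀ p : Plane × Plane,
      ENNReal.ofReal (K p.1 * K p.2) = ENNReal.ofReal (K p.1) * ENNReal.ofReal (K p.2) :=
    fun p => ENNReal.ofReal_mul (hK0 p.1)
  have hglobalK : ∫⁻ p : Plane × Plane, ENNReal.ofReal (K p.1 * K p.2)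
      = (∫⁻ x, ENNReal.ofReal (K x)) * ∫⁻ x, ENNReal.ofReal (K x) := by
    simp_rw [hKpair]
    exact lintegral_pair _ _ (ENNReal.measurable_ofReal.comp hKm)
      (ENNReal.measurable_ofReal.comp hKm)
  -- degenerate case
  by_cases hKz : Asq β K = 0
  · exfalso
    apply hJ0
    have hIK : ∫⁻ x, ENNReal.ofReal (K x) = 0 := by
      have hb : ∫⁻ p : Plane × Plane, ENNReal.ofReal (K p.1 * K p.2) = 0 := by
        rw [lintegral_eq_box hKbox]
        have := box_le_Asq β K ((0:ℝ),(0:ℝ)) hRN hRN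
        rw [hKz, zero_mul] at this
        exact le_antisymm this zero_le
      rw [hglobalK] at hb
      exact (mul_self_eq_zero).1 hb
    have : J ≤ ∫⁻ x, ENNReal.ofReal (K x) := by
      rw [hJK]
      refine lintegral_mono fun x => ENNReal.ofReal_le_ofReal ?_
      exact mul_le_of_le_one_left (hK0 x) (Real.rpow_le_one (hG0 x) (hG1 x) hβ.le)
    exact le_antisymm (this.trans hIK.le) zero_le
  -- finiteness of Asq β K
  have hKfin : Asq β K ≠ ⊤ := by
    have hb : Asq β K ≤ volume QN * volume QN := by
      refine Asq_le_of_forall fun x R₁ R₂ h1 h2 => ?_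
      have hle : ∀ p : Plane × Plane, ENNReal.ofReal (K p.1 * K p.2)
          ≤ QN.indicator (fun _ => (1:ℝ≥0∞)) p.1 * QN.indicator (fun _ => (1:ℝ≥0∞)) p.2 := by
        intro p
        rw [hKpair p]
        refine mul_le_mul' ?_ ?_ <;>
        · first
          | (by_cases hx : p.1 ∈ QN
             · simp only [Set.indicator, hx, if_true]
               exact ENNReal.ofReal_le_one.2 (hK1 _)
             · simp [Set.indicator, hx, hKdef, hHNout _ hx])
          | (by_cases hx : p.2 ∈ QN
             · simp only [Set.indicator, hx, if_true]
               exact ENNReal.ofReal_le_one.2 (hK1 _)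
             · simp [Set.indicator, hx, hKdef, hHNout _ hx])
      calc ∫⁻ p in MTBox x R₁ R₂, ENNReal.ofReal (K p.1 * K p.2)
          ≤ ∫⁻ p : Plane × Plane, ENNReal.ofReal (K p.1 * K p.2) :=
            setLIntegral_le_lintegral _ _
      _ ≤ ∫⁻ p : Plane × Plane,
            QN.indicator (fun _ => (1:ℝ≥0∞)) p.1 * QN.indicator (fun _ => (1:ℝ≥0∞)) p.2 :=
            lintegral_mono hle
      _ = volume QN * volume QN := by
            rw [lintegral_pair _ _ (measurable_const.indicator hQNm)
              (measurable_const.indicator hQNm)]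
            rw [lintegral_indicator_const hQNm, one_mul]
      _ ≤ volume QN * volume QN * ENNReal.ofReal ((R₁*R₂)^β) :=
            le_mul_of_one_le_right zero_le (one_le_boxweight hβ.le h1 h2)
    exact (lt_of_le_of_lt hb (ENNReal.mul_lt_top (lt_top_iff_ne_top.2 hvolQN)
      (lt_top_iff_ne_top.2 hvolQN))).ne
  have hAdimK0 : Adim β K ≠ 0 := by
    rw [Adim]
    simp [ENNReal.rpow_eq_zero_iff, hKz, hKfin]
  have hAdimKtop : Adim β K ≠ ⊤ := by
    rw [Adim]
    exact (ENNReal.rpow_lt_top_of_nonneg (by norm_num) hKfin).ne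
  -- K is an admissible test function for the β-problem
  have hKmem : K ∈ {H : Plane → ℝ | Measurable H ∧ (∀ x, 0 ≤ H x ∧ H x ≤ 1) ∧
      0 < Adim β H ∧ Adim β H < ⊤} :=
    ⟨hKm, fun x => ⟨hK0 x, hK1 x⟩, pos_iff_ne_zero.2 hAdimK0, lt_top_iff_ne_top.2 hAdimKtop⟩
  -- the defining property of MMax β F applied to K
  have hdagger : ∫⁻ x, ENNReal.ofReal (F x ^ β * K x) ≤ MMax β F ^ β * Adim β K := by
    have h1 := le_MMax_pow hβ F K hKmem
    rw [ENNReal.inv_mul_le_iff hAdimK0 hAdimKtop] at h1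
    exact h1.trans (le_of_eq (mul_comm _ _))
  -- deduce J ≤ Adim β K
  have hMb0 : MMax β F ^ β ≠ 0 := by
    simp [ENNReal.rpow_eq_zero_iff, hM0, hMtop]
  have hMbtop : MMax β F ^ β ≠ ⊤ := by
    simp [ENNReal.rpow_eq_top_iff, hM0, hMtop]
  have hMpow : MMax β F ^ β = ENNReal.ofReal (Mr ^ β) := by
    conv_lhs => rw [← ENNReal.ofReal_toReal hMtop]
    exact ENNReal.ofReal_rpow_of_pos hMr
  have hJdagger : J ≤ Adim β K := by
    have hmulJ : MMax β F ^ β * J ≤ MMax β F ^ β * Adim β K := by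
      have heq : MMax β F ^ β * J = ∫⁻ x, ENNReal.ofReal (Mr ^ β * (G x ^ β * K x)) := by
        rw [hJK, hMpow, ← lintegral_const_mul' _ _ ENNReal.ofReal_ne_top]
        refine lintegral_congr fun x => ?_
        rw [ENNReal.ofReal_mul (Real.rpow_nonneg hMr.le β)]
      rw [heq]
      refine le_trans (lintegral_mono fun x => ENNReal.ofReal_le_ofReal ?_) hdagger
      have hGF : Mr * G x ≤ F x := by
        have := min_le_left (F x / Mr) 1
        calc Mr * G x ≤ Mr * (F x / Mr) := by
              exact mul_le_mul_of_nonneg_left this hMr.le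
        _ = F x := by field_simp
      have hpow : Mr ^ β * G x ^ β ≤ F x ^ β := by
        rw [← Real.mul_rpow hMr.le (hG0 x)]
        exact Real.rpow_le_rpow (mul_nonneg hMr.le (hG0 x)) hGF hβ.le
      calc Mr ^ β * (G x ^ β * K x) = (Mr ^ β * G x ^ β) * K x := by ring
      _ ≤ F x ^ β * K x := mul_le_mul_of_nonneg_right hpow (hK0 x)
    exact (ENNReal.mul_le_mul_iff_right hMb0 hMbtop).1 hmulJ
  -- Hölder inequality on each box
  have hAsqK : Asq β K ≤ (J * J) ^ ((α-β)/α) * Asq α H ^ (β/α) := by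
    refine Asq_le_of_forall fun x R₁ R₂ h1 h2 => ?_
    have hT : (0:ℝ) < R₁ * R₂ := by nlinarith
    set f : Plane × Plane → ℝ≥0∞ := fun p =>
      ENNReal.ofReal ((G p.1 * G p.2) ^ (α-β) * (HN p.1 * HN p.2) ^ ((α-β)/α)) with hfdef
    set g : Plane × Plane → ℝ≥0∞ := fun p =>
      ENNReal.ofReal ((HN p.1 * HN p.2) ^ (β/α)) with hgdef
    have hGGm : Measurable fun p : Plane × Plane => G p.1 * G p.2 :=
      (hGm.comp measurable_fst).mul (hGm.comp measurable_snd)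
    have hHHm : Measurable fun p : Plane × Plane => HN p.1 * HN p.2 :=
      (hHNm.comp measurable_fst).mul (hHNm.comp measurable_snd)
    have hfm : Measurable f := ENNReal.measurable_ofReal.comp
      ((meas_rpow hGGm hs.le).mul (meas_rpow hHHm (by positivity)))
    have hgm : Measurable g := ENNReal.measurable_ofReal.comp (meas_rpow hHHm (by positivity))
    have hconj : ((α/(α-β)) : ℝ).HolderConjugate (α/β) := by
      rw [Real.holderConjugate_iff]
      constructor
      · rw [lt_div_iff₀ hs]; linarith
      · rw [inv_div, inv_div, ← add_div, show α - β + β = α by ring, div_self hα.ne']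
    have hHH0 : ∀ p : Plane × Plane, 0 ≤ HN p.1 * HN p.2 :=
      fun p => mul_nonneg (hHN0 _) (hHN0 _)
    have hGG0 : ∀ p : Plane × Plane, 0 ≤ G p.1 * G p.2 :=
      fun p => mul_nonneg (hG0 _) (hG0 _)
    have hsplit : ∀ p : Plane × Plane, ENNReal.ofReal (K p.1 * K p.2) = (f * g) p := by
      intro p
      have hea : (α - β)/α + β/α = 1 := by
        rw [← add_div, show α - β + β = α by ring, div_self hα.ne']
      have e2 : (HN p.1 * HN p.2) ^ ((α-β)/α) * (HN p.1 * HN p.2) ^ (β/α)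
          = HN p.1 * HN p.2 := by
        rw [← Real.rpow_add' (hHH0 p) (by rw [hea]; norm_num), hea, Real.rpow_one]
      have e1 : (G p.1 * G p.2) ^ (α-β) = G p.1 ^ (α-β) * G p.2 ^ (α-β) :=
        Real.mul_rpow (hG0 _) (hG0 _)
      show ENNReal.ofReal (K p.1 * K p.2) = f p * g p
      rw [hfdef, hgdef]
      rw [← ENNReal.ofReal_mul (mul_nonneg (Real.rpow_nonneg (hGG0 p) _)
        (Real.rpow_nonneg (hHH0 p) _))]
      congr 1
      calc K p.1 * K p.2 = (G p.1 ^ (α-β) * G p.2 ^ (α-β)) * (HN p.1 * HN p.2) := by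
            rw [hKdef]; ring
      _ = (G p.1 * G p.2) ^ (α-β)
            * ((HN p.1 * HN p.2) ^ ((α-β)/α) * (HN p.1 * HN p.2) ^ (β/α)) := by
            rw [e1, e2]
      _ = (G p.1 * G p.2) ^ (α-β) * (HN p.1 * HN p.2) ^ ((α-β)/α)
            * (HN p.1 * HN p.2) ^ (β/α) := by ring
    have hholder := ENNReal.lintegral_mul_le_Lp_mul_Lq
      (volume.restrict (MTBox x R₁ R₂)) hconj hfm.aemeasurable hgm.aemeasurable
    have hf_int : ∫⁻ p in MTBox x R₁ R₂, f p ^ (α/(α-β)) ≤ J * J := by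
      have hfeq : ∀ p : Plane × Plane, f p ^ (α/(α-β)) = ENNReal.ofReal (u p.1 * u p.2) := by
        intro p
        rw [hfdef]
        rw [ENNReal.ofReal_rpow_of_nonneg (mul_nonneg (Real.rpow_nonneg (hGG0 p) _)
          (Real.rpow_nonneg (hHH0 p) _)) (by positivity)]
        congr 1
        rw [Real.mul_rpow (Real.rpow_nonneg (hGG0 p) _) (Real.rpow_nonneg (hHH0 p) _),
          ← Real.rpow_mul (hGG0 p), ← Real.rpow_mul (hHH0 p),
          show (α-β) * (α/(α-β)) = α by field_simp,
          show (α-β)/α * (α/(α-β)) = 1 by field_simp,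
          Real.rpow_one, Real.mul_rpow (hG0 _) (hG0 _), hudef]
        ring
      calc ∫⁻ p in MTBox x R₁ R₂, f p ^ (α/(α-β))
          = ∫⁻ p in MTBox x R₁ R₂, ENNReal.ofReal (u p.1 * u p.2) :=
            lintegral_congr fun p => hfeq p
      _ ≤ ∫⁻ p : Plane × Plane, ENNReal.ofReal (u p.1 * u p.2) :=
            setLIntegral_le_lintegral _ _
      _ = J * J := by
            have hpt : ∀ p : Plane × Plane, ENNReal.ofReal (u p.1 * u p.2)
                = ENNReal.ofReal (u p.1) * ENNReal.ofReal (u p.2) :=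
              fun p => ENNReal.ofReal_mul (hu0 _)
            have hmeas : Measurable fun x : Plane => ENNReal.ofReal (u x) :=
              ENNReal.measurable_ofReal.comp hum
            calc ∫⁻ p : Plane × Plane, ENNReal.ofReal (u p.1 * u p.2)
                = ∫⁻ p : Plane × Plane, ENNReal.ofReal (u p.1) * ENNReal.ofReal (u p.2) :=
                  lintegral_congr hpt
            _ = J * J := lintegral_pair _ _ hmeas hmeas
    have hg_int : ∫⁻ p in MTBox x R₁ R₂, g p ^ (α/β)
        ≤ Asq α H * ENNReal.ofReal ((R₁*R₂)^α) := by
      have hgeq : ∀ p : Plane × Plane, g p ^ (α/β) = ENNReal.ofReal (HN p.1 * HN p.2) := by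
        intro p
        rw [hgdef, ENNReal.ofReal_rpow_of_nonneg (Real.rpow_nonneg (hHH0 p) _) (by positivity),
          ← Real.rpow_mul (hHH0 p), show β/α * (α/β) = 1 by field_simp, Real.rpow_one]
      have hmono : ∀ p : Plane × Plane, ENNReal.ofReal (HN p.1 * HN p.2)
          ≤ ENNReal.ofReal (H p.1 * H p.2) := fun p =>
        ENNReal.ofReal_le_ofReal (mul_le_mul (hHNH _) (hHNH _) (hHN0 _) (hHb _).1)
      calc ∫⁻ p in MTBox x R₁ R₂, g p ^ (α/β)
          = ∫⁻ p in MTBox x R₁ R₂, ENNReal.ofReal (HN p.1 * HN p.2) :=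
            lintegral_congr fun p => hgeq p
      _ ≤ ∫⁻ p in MTBox x R₁ R₂, ENNReal.ofReal (H p.1 * H p.2) := lintegral_mono hmono
      _ ≤ Asq α H * ENNReal.ofReal ((R₁*R₂)^α) := box_le_Asq α H x h1 h2
    have hBB : ∫⁻ p in MTBox x R₁ R₂, ENNReal.ofReal (K p.1 * K p.2)
        ≤ (J*J) ^ ((α-β)/α) * (Asq α H ^ (β/α) * ENNReal.ofReal ((R₁*R₂)^β)) := by
      calc ∫⁻ p in MTBox x R₁ R₂, ENNReal.ofReal (K p.1 * K p.2)
          = ∫⁻ p in MTBox x R₁ R₂, (f * g) p := lintegral_congr fun p => hsplit p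
      _ ≤ (∫⁻ p in MTBox x R₁ R₂, f p ^ (α/(α-β))) ^ (1/(α/(α-β)))
            * (∫⁻ p in MTBox x R₁ R₂, g p ^ (α/β)) ^ (1/(α/β)) := hholder
      _ ≤ (J*J) ^ (1/(α/(α-β))) * (Asq α H * ENNReal.ofReal ((R₁*R₂)^α)) ^ (1/(α/β)) :=
            mul_le_mul' (ENNReal.rpow_le_rpow hf_int (by positivity))
              (ENNReal.rpow_le_rpow hg_int (by positivity))
      _ = (J*J) ^ ((α-β)/α) * (Asq α H ^ (β/α) * ENNReal.ofReal ((R₁*R₂)^β)) := by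
            rw [one_div_div, one_div_div,
              ENNReal.mul_rpow_of_nonneg _ _ (by positivity : (0:ℝ) ≤ β/α)]
            congr 2
            rw [ENNReal.ofReal_rpow_of_pos (Real.rpow_pos_of_pos hT α),
              ← Real.rpow_mul hT.le, show α * (β/α) = β by field_simp]
    exact hBB.trans (le_of_eq (mul_assoc _ _ _).symm)
  -- self-improvement: conclude J ≤ Adim α H
  by_cases hA0 : Asq α H = 0
  · exfalso
    apply hJ0
    have h0 : Adim β K ≤ 0 := by
      have hz := hAsqK
      rw [hA0, ENNReal.zero_rpow_of_pos (by positivity), mul_zero] at hz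
      rw [Adim]
      calc Asq β K ^ ((1:ℝ)/2) ≤ (0:ℝ≥0∞) ^ ((1:ℝ)/2) :=
            ENNReal.rpow_le_rpow hz (by norm_num)
      _ = 0 := by rw [ENNReal.zero_rpow_of_pos (by norm_num)]
    exact le_antisymm (hJdagger.trans h0) zero_le
  have hchain : J ≤ ((J*J) ^ ((α-β)/α) * Asq α H ^ (β/α)) ^ ((1:ℝ)/2) := by
    refine hJdagger.trans ?_
    rw [Adim]
    exact ENNReal.rpow_le_rpow hAsqK (by norm_num)
  have hJJ : J * J = J ^ (2:ℝ) := by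
    rw [show (2:ℝ) = 1 + 1 by norm_num, ENNReal.rpow_add 1 1 hJ0 hJtop, ENNReal.rpow_one]
  have hkey : J ≤ J ^ ((α-β)/α) * Asq α H ^ (β/(2*α)) := by
    refine hchain.trans (le_of_eq ?_)
    rw [hJJ, ← ENNReal.rpow_mul J 2 ((α-β)/α),
      ENNReal.mul_rpow_of_nonneg _ _ (by norm_num : (0:ℝ) ≤ 1/2),
      ← ENNReal.rpow_mul J, ← ENNReal.rpow_mul (Asq α H),
      show 2*((α-β)/α)*(1/2) = (α-β)/α by ring,
      show (β/α)*(1/2 : ℝ) = β/(2*α) by ring]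
  have hJe0 : J ^ ((α-β)/α) ≠ 0 := by simp [ENNReal.rpow_eq_zero_iff, hJ0, hJtop]
  have hJetop : J ^ ((α-β)/α) ≠ ⊤ := by simp [ENNReal.rpow_eq_top_iff, hJ0, hJtop]
  have hcancel : J ^ (β/α) ≤ Asq α H ^ (β/(2*α)) := by
    have h := hkey
    nth_rewrite 1 [show J = J ^ ((α-β)/α) * J ^ (β/α) by
      rw [← ENNReal.rpow_add _ _ hJ0 hJtop, ← add_div,
        show α - β + β = α by ring, div_self hα.ne', ENNReal.rpow_one]] at h
    exact (ENNReal.mul_le_mul_iff_right hJe0 hJetop).1 h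
  have hfinal := ENNReal.rpow_le_rpow hcancel (by positivity : (0:ℝ) ≤ α/β)
  rw [← ENNReal.rpow_mul, ← ENNReal.rpow_mul,
    show β/α * (α/β) = 1 by
      rw [div_mul_div_comm, mul_comm β α]
      exact div_self (by positivity : (0:ℝ) < α*β).ne',
    show β/(2*α) * (α/β) = 1/2 by
      rw [div_mul_div_comm, show (2*α)*β = (β*α)*2 by ring, div_mul_eq_div_div,
        div_self (by positivity : (0:ℝ) < β*α).ne'],
    ENNReal.rpow_one] at hfinal
  rw [Adim]
  exact hfinal

end Main


/-- the dimensional maximal inequality `𝕄F(α) ≤ 𝕄F(β)`. -/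
theorem stmt3 (α β : ℝ) (hβ : 0 < β) (hβα : β < α) (hα2 : α ≤ 2)
    (F : Plane → ℝ) (hFm : Measurable F) (hF0 : ∀ x, 0 ≤ F x) :
    MMax α F ≤ MMax β F := by
  have hα : 0 < α := hβ.trans hβα
  by_cases hMtop : MMax β F = ⊤
  · rw [hMtop]; exact le_top
  by_cases hM0 : MMax β F = 0
  · -- degenerate case: `F = 0` a.e.
    have hae := ae_le_MMax hβ hFm hMtop
    rw [hM0, ENNReal.toReal_zero] at hae
    rw [hM0]
    refine MMax_le hα F 0 fun H hHm hHb h3 h4 => ?_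
    have hzero : ∫⁻ x, ENNReal.ofReal (F x ^ α * H x) = 0 := by
      have hz : (fun x => ENNReal.ofReal (F x ^ α * H x)) =ᵐ[volume] (fun _ => 0) := by
        filter_upwards [hae] with x hx
        have hx0 : F x = 0 := le_antisymm hx (hF0 x)
        simp [hx0, Real.zero_rpow hα.ne']
      rw [lintegral_congr_ae hz, lintegral_zero]
    rw [hzero]
    exact zero_le
  · -- main case
    have hae := ae_le_MMax hβ hFm hMtop
    set Mr := (MMax β F).toReal with hMrdef
    have hMr : 0 < Mr := ENNReal.toReal_pos hM0 hMtop
    refine MMax_le hα F (MMax β F) fun H hHm hHb h3 h4 => ?_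
    set G : Plane → ℝ := fun x => min (F x / Mr) 1 with hGdef
    have hNb : ∀ N : ℕ, ∫⁻ x, ENNReal.ofReal (F x ^ α *
        ((Set.Icc (-(N:ℝ)) (N:ℝ) ×ˢ Set.Icc (-(N:ℝ)) (N:ℝ)).indicator H) x)
        ≤ MMax β F ^ α * Adim α H := by
      intro N
      set HN := (Set.Icc (-(N:ℝ)) (N:ℝ) ×ˢ Set.Icc (-(N:ℝ)) (N:ℝ)).indicator H with hHNdef
      have haeeq : (fun x => ENNReal.ofReal (F x ^ α * HN x))
          =ᵐ[volume] (fun x => ENNReal.ofReal (Mr ^ α) * ENNReal.ofReal (G x ^ α * HN x)) := by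
        filter_upwards [hae] with x hx
        have hGx : G x = F x / Mr := min_eq_left ((div_le_one hMr).2 hx)
        have heq : Mr ^ α * (G x ^ α * HN x) = F x ^ α * HN x := by
          rw [hGx, Real.div_rpow (hF0 x) hMr.le]
          field_simp
        rw [← ENNReal.ofReal_mul (Real.rpow_nonneg hMr.le α), heq]
      have hMpow : MMax β F ^ α = ENNReal.ofReal (Mr ^ α) := by
        conv_lhs => rw [← ENNReal.ofReal_toReal hMtop]
        exact ENNReal.ofReal_rpow_of_pos hMr
      calc ∫⁻ x, ENNReal.ofReal (F x ^ α * HN x)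
          = ∫⁻ x, ENNReal.ofReal (Mr ^ α) * ENNReal.ofReal (G x ^ α * HN x) :=
            lintegral_congr_ae haeeq
      _ = ENNReal.ofReal (Mr ^ α) * ∫⁻ x, ENNReal.ofReal (G x ^ α * HN x) :=
            lintegral_const_mul' _ _ ENNReal.ofReal_ne_top
      _ ≤ ENNReal.ofReal (Mr ^ α) * Adim α H :=
            mul_le_mul_right (key_J_le hβ hβα hFm hF0 hM0 hMtop hHm hHb N) _
      _ = MMax β F ^ α * Adim α H := by rw [hMpow]
    have hmeasN : ∀ N : ℕ, Measurable fun x => ENNReal.ofReal (F x ^ α *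
        ((Set.Icc (-(N:ℝ)) (N:ℝ) ×ˢ Set.Icc (-(N:ℝ)) (N:ℝ)).indicator H) x) := fun N =>
      ENNReal.measurable_ofReal.comp ((meas_rpow hFm hα.le).mul
        (hHm.indicator (measurableSet_Icc.prod measurableSet_Icc)))
    have hmonoN : Monotone fun (N : ℕ) (x : Plane) => ENNReal.ofReal (F x ^ α *
        ((Set.Icc (-(N:ℝ)) (N:ℝ) ×ˢ Set.Icc (-(N:ℝ)) (N:ℝ)).indicator H) x) := by
      intro N M hNM
      intro x
      apply ENNReal.ofReal_le_ofReal
      refine mul_le_mul_of_nonneg_left ?_ (Real.rpow_nonneg (hF0 x) α)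
      refine Set.indicator_le_indicator_of_subset ?_ (fun a => (hHb a).1) x
      refine Set.prod_mono ?_ ?_ <;>
        exact Set.Icc_subset_Icc (neg_le_neg (by exact_mod_cast hNM))
          (by exact_mod_cast hNM)
    have hptsup : ∀ x : Plane, (⨆ N : ℕ, ENNReal.ofReal (F x ^ α *
        ((Set.Icc (-(N:ℝ)) (N:ℝ) ×ˢ Set.Icc (-(N:ℝ)) (N:ℝ)).indicator H) x))
        = ENNReal.ofReal (F x ^ α * H x) := by
      intro x
      apply le_antisymm
      · refine iSup_le fun N => ENNReal.ofReal_le_ofReal ?_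
        refine mul_le_mul_of_nonneg_left ?_ (Real.rpow_nonneg (hF0 x) α)
        exact Set.indicator_le_self' (fun a _ => (hHb a).1) x
      · obtain ⟨N, hN⟩ := exists_nat_ge (max |x.1| |x.2|)
        refine le_iSup_of_le N (le_of_eq ?_)
        have hx : x ∈ Set.Icc (-(N:ℝ)) (N:ℝ) ×ˢ Set.Icc (-(N:ℝ)) (N:ℝ) :=
          Set.mem_prod.2 ⟨Set.mem_Icc.2 (abs_le.1 ((le_max_left _ _).trans hN)),
            Set.mem_Icc.2 (abs_le.1 ((le_max_right _ _).trans hN))⟩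
        rw [Set.indicator_of_mem hx]
    calc ∫⁻ x, ENNReal.ofReal (F x ^ α * H x)
        = ∫⁻ x, ⨆ N : ℕ, ENNReal.ofReal (F x ^ α *
            ((Set.Icc (-(N:ℝ)) (N:ℝ) ×ˢ Set.Icc (-(N:ℝ)) (N:ℝ)).indicator H) x) :=
          lintegral_congr fun x => (hptsup x).symm
    _ = ⨆ N : ℕ, ∫⁻ x, ENNReal.ofReal (F x ^ α *
            ((Set.Icc (-(N:ℝ)) (N:ℝ) ×ˢ Set.Icc (-(N:ℝ)) (N:ℝ)).indicator H) x) :=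
          lintegral_iSup hmeasN hmonoN
    _ ≤ MMax β F ^ α * Adim α H := iSup_le hNb
end
end

section
/- Suppose 0 < β < α ≤ 2. Then ℳF(α) ≤ ℳF(β) for all non-negative Lebesgue measurable F on ℝ², where ℳF(γ) = (sup_H (1/𝒜_γ(H)) ∫ F(x)^γ H(x) dx)^{1/γ}, the sup over measurable H : ℝ² → [0,1] with 0 < 𝒜_γ(H) < ∞, and 𝒜_γ(H) = inf{C : ∫_{T(x₀,R)} H(x) dx ≤ C R^γ for all x₀ ∈ ℝ², R ≥ 1}. -/
open MeasureTheory ENNReal Real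

attribute [local instance 10] Classical.propDecidable

noncomputable section

/-- The tube `T(x₀,R)` of cross-section `2R` through `x₀` parallel to `v`:
`{x : |(x−x₀)·v^⊥| ≤ R}` where `v^⊥ = (-v₂, v₁)`. -/
def MTtube (v x₀ : Plane) (R : ℝ) : Set Plane :=
  {x | |(x.1 - x₀.1) * (-v.2) + (x.2 - x₀.2) * v.1| ≤ R}

/-- `𝒜_γ(H)`: infimum of constants `C` with `∫_{T(x₀,R)} H ≤ C R^γ` for all `x₀`, `R ≥ 1`. -/
def calA (v : Plane) (γ : ℝ) (H : Plane → ℝ) : ℝ≥0∞ :=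
  sInf {C : ℝ≥0∞ | ∀ (x₀ : Plane) (R : ℝ), 1 ≤ R →
    ∫⁻ x in MTtube v x₀ R, ENNReal.ofReal (H x) ≤ C * ENNReal.ofReal (R ^ γ)}

/-- The tube-dimensional maximal function
`ℳF(γ) = (sup_H 𝒜_γ(H)⁻¹ ∫ F^γ H dx)^{1/γ}`, the sup over measurable
`H : ℝ² → [0,1]` with `0 < 𝒜_γ(H) < ∞`. -/
def MMaxT (v : Plane) (γ : ℝ) (F : Plane → ℝ) : ℝ≥0∞ :=
  (⨆ H ∈ {H : Plane → ℝ | Measurable H ∧ (∀ x, 0 ≤ H x ∧ H x ≤ 1) ∧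
      0 < calA v γ H ∧ calA v γ H < ⊤},
    (calA v γ H)⁻¹ * ∫⁻ x, ENNReal.ofReal (F x ^ γ * H x)) ^ (1 / γ)


section Aux

variable {v : Plane}

lemma tube_measurableSet (v x₀ : Plane) (R : ℝ) : MeasurableSet (MTtube v x₀ R) := by
  have h : Measurable fun x : Plane => |(x.1 - x₀.1) * (-v.2) + (x.2 - x₀.2) * v.1| := by
    fun_prop
  exact measurableSet_le h measurable_const

lemma tube_exhaust (v : Plane) (x : Plane) : ∃ n : ℕ, x ∈ MTtube v 0 ((n : ℝ) + 1) := by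
  obtain ⟨n, hn⟩ := exists_nat_ge (|(x.1 - (0:ℝ)) * (-v.2) + (x.2 - (0:ℝ)) * v.1|)
  exact ⟨n, by simpa [MTtube] using hn.trans (by linarith)⟩

lemma lintegral_tube_le (γ : ℝ) (H : Plane → ℝ) {x₀ : Plane} {R : ℝ} (hR : 1 ≤ R) :
    ∫⁻ x in MTtube v x₀ R, ENNReal.ofReal (H x) ≤ calA v γ H * ENNReal.ofReal (R ^ γ) := by
  set r := ENNReal.ofReal (R ^ γ) with hr
  have hR0 : (0:ℝ) < R := lt_of_lt_of_le one_pos hR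
  have hr0 : r ≠ 0 := by
    simp only [hr, ne_eq, ENNReal.ofReal_eq_zero, not_le]
    exact Real.rpow_pos_of_pos hR0 γ
  have hrt : r ≠ ⊤ := ENNReal.ofReal_ne_top
  have h2 : (∫⁻ x in MTtube v x₀ R, ENNReal.ofReal (H x)) / r ≤ calA v γ H :=
    le_sInf fun C hC => ENNReal.div_le_of_le_mul (hC x₀ R hR)
  calc ∫⁻ x in MTtube v x₀ R, ENNReal.ofReal (H x)
      = (∫⁻ x in MTtube v x₀ R, ENNReal.ofReal (H x)) / r * r :=
        (ENNReal.div_mul_cancel hr0 hrt).symm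
    _ ≤ calA v γ H * r := mul_le_mul_left h2 r

lemma calA_le {γ : ℝ} {H : Plane → ℝ} {C : ℝ≥0∞}
    (h : ∀ (x₀ : Plane) (R : ℝ), 1 ≤ R →
      ∫⁻ x in MTtube v x₀ R, ENNReal.ofReal (H x) ≤ C * ENNReal.ofReal (R ^ γ)) :
    calA v γ H ≤ C := sInf_le h

lemma calA_mono {γ : ℝ} {H₁ H₂ : Plane → ℝ} (h : ∀ x, H₁ x ≤ H₂ x) :
    calA v γ H₁ ≤ calA v γ H₂ :=
  sInf_le_sInf fun C hC x₀ R hR =>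
    le_trans (lintegral_mono fun x => ENNReal.ofReal_le_ofReal (h x)) (hC x₀ R hR)

lemma ae_zero_of_calA_zero {γ : ℝ} {H : Plane → ℝ} (hm : Measurable H)
    (h : calA v γ H = 0) : ∀ᵐ x, ENNReal.ofReal (H x) = 0 := by
  have key : ∀ n : ℕ, ∀ᵐ x, x ∈ MTtube v 0 ((n:ℝ)+1) → ENNReal.ofReal (H x) = 0 := by
    intro n
    have h1 : ∫⁻ x in MTtube v 0 ((n:ℝ)+1), ENNReal.ofReal (H x) = 0 := by
      have hb := lintegral_tube_le (v := v) γ H (x₀ := 0) (R := (n:ℝ)+1)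
        (by have := Nat.cast_nonneg (α := ℝ) n; linarith)
      rw [h, zero_mul] at hb
      exact le_antisymm hb (zero_le)
    have h2 : ∀ᵐ x ∂(volume.restrict (MTtube v 0 ((n:ℝ)+1))), ENNReal.ofReal (H x) = 0 := by
      have h3 := (lintegral_eq_zero_iff (by fun_prop : Measurable fun x : Plane => ENNReal.ofReal (H x))).mp h1
      filter_upwards [h3] with x hx using hx
    exact (ae_restrict_iff' (tube_measurableSet v 0 _)).mp h2
  filter_upwards [ae_all_iff.mpr key] with x hx
  obtain ⟨n, hn⟩ := tube_exhaust v x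
  exact hx n hn

lemma rpow_split (x : ℝ≥0∞) {c d : ℝ} (hc : 0 < c) (hd : 0 < d) (hcd : c + d = 1) :
    x = x ^ c * x ^ d := by
  rcases eq_or_ne x 0 with rfl | h0
  · rw [ENNReal.zero_rpow_of_pos hc, zero_mul]
  rcases eq_or_ne x ⊤ with rfl | ht
  · rw [ENNReal.top_rpow_of_pos hc, ENNReal.top_rpow_of_pos hd, top_mul_top]
  · rw [← ENNReal.rpow_add c d h0 ht, hcd, ENNReal.rpow_one]

lemma min_le_rpow_mul_rpow (a b : ℝ≥0∞) {c d : ℝ} (hc : 0 < c) (hd : 0 < d) (hcd : c + d = 1) :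
    min a b ≤ a ^ c * b ^ d := by
  conv_lhs => rw [rpow_split (min a b) hc hd hcd]
  exact mul_le_mul' (ENNReal.rpow_le_rpow (min_le_left a b) hc.le)
    (ENNReal.rpow_le_rpow (min_le_right a b) hd.le)

lemma cheb {β : ℝ} (hβ : 0 < β) (F : Plane → ℝ) (hF0 : ∀ x, 0 ≤ F x)
    {w : Plane → ℝ} (hwm : Measurable w) (hw0 : ∀ x, 0 ≤ w x) (hw1 : ∀ x, w x ≤ 1)
    (hfin : calA v β w ≠ ⊤) :
    ∫⁻ x, ENNReal.ofReal (F x) ^ β * ENNReal.ofReal (w x)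
      ≤ calA v β w * (MMaxT v β F) ^ β := by
  have hieq : (fun x => ENNReal.ofReal (F x) ^ β * ENNReal.ofReal (w x))
      = fun x => ENNReal.ofReal (F x ^ β * w x) := by
    funext x
    rw [ENNReal.ofReal_mul (Real.rpow_nonneg (hF0 x) β),
      ENNReal.ofReal_rpow_of_nonneg (hF0 x) hβ.le]
  rcases eq_or_ne (calA v β w) 0 with h0 | h0
  · have hz := ae_zero_of_calA_zero hwm h0
    have : ∫⁻ x, ENNReal.ofReal (F x) ^ β * ENNReal.ofReal (w x) = 0 := by
      rw [← lintegral_zero]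
      apply lintegral_congr_ae
      filter_upwards [hz] with x hx
      rw [hx, mul_zero]
    rw [this]
    exact zero_le
  · have hmem : w ∈ {H : Plane → ℝ | Measurable H ∧ (∀ x, 0 ≤ H x ∧ H x ≤ 1) ∧
        0 < calA v β H ∧ calA v β H < ⊤} :=
      ⟨hwm, fun x => ⟨hw0 x, hw1 x⟩, pos_iff_ne_zero.mpr h0, lt_top_iff_ne_top.mpr hfin⟩
    have hsup := le_biSup
      (f := fun H : Plane → ℝ => (calA v β H)⁻¹ * ∫⁻ x, ENNReal.ofReal (F x ^ β * H x)) hmem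
    have hS : (MMaxT v β F) ^ β = ⨆ H ∈ {H : Plane → ℝ | Measurable H ∧ (∀ x, 0 ≤ H x ∧ H x ≤ 1) ∧
        0 < calA v β H ∧ calA v β H < ⊤},
        (calA v β H)⁻¹ * ∫⁻ x, ENNReal.ofReal (F x ^ β * H x) := by
      rw [MMaxT, ← ENNReal.rpow_mul, one_div, inv_mul_cancel₀ hβ.ne', ENNReal.rpow_one]
    rw [hS, hieq]
    calc ∫⁻ x, ENNReal.ofReal (F x ^ β * w x)
        = calA v β w * ((calA v β w)⁻¹ * ∫⁻ x, ENNReal.ofReal (F x ^ β * w x)) := by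
          rw [← mul_assoc, ENNReal.mul_inv_cancel h0 hfin, one_mul]
      _ ≤ calA v β w * _ := mul_le_mul_right hsup _

end Aux

lemma iterGeo {A K : ℝ≥0∞} (hA0 : A ≠ 0) (hAt : A ≠ ⊤) {c a : ℝ} (hc : 0 < c) (ha : 0 < a)
    (hca : c + a = 1) {R αe βe : ℝ} (hR0 : 0 ≤ R) (hab : αe * c = βe) :
    (A * ENNReal.ofReal (R ^ αe)) ^ c * (A * K) ^ a = A * K ^ a * ENNReal.ofReal (R ^ βe) := by
  rw [ENNReal.mul_rpow_of_nonneg _ _ hc.le, ENNReal.mul_rpow_of_nonneg _ _ ha.le,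
    ENNReal.ofReal_rpow_of_nonneg (Real.rpow_nonneg hR0 αe) hc.le,
    ← Real.rpow_mul hR0, hab]
  calc A ^ c * ENNReal.ofReal (R ^ βe) * (A ^ a * K ^ a)
      = (A ^ c * A ^ a) * K ^ a * ENNReal.ofReal (R ^ βe) := by ring
    _ = A * K ^ a * ENNReal.ofReal (R ^ βe) := by
        rw [← ENNReal.rpow_add c a hA0 hAt, hca, ENNReal.rpow_one]

section Key


/-- truncated weight -/
def Wt (t : ℝ) (T₀ : Set Plane) (H F : Plane → ℝ) (E : Set Plane) (x : Plane) : ℝ :=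
  if x ∈ E ∧ t < F x ∧ x ∈ T₀ then H x else 0

section WtLemmas

variable {t : ℝ} {T₀ : Set Plane} {H F : Plane → ℝ} {E : Set Plane} {v : Plane}

lemma Wt_nonneg (hH : ∀ x, 0 ≤ H x) (x : Plane) : 0 ≤ Wt t T₀ H F E x := by
  unfold Wt; split_ifs with h
  · exact hH x
  · exact le_refl 0

lemma Wt_le_one (hH : ∀ x, H x ≤ 1) (x : Plane) : Wt t T₀ H F E x ≤ 1 := by
  unfold Wt; split_ifs with h
  · exact hH x
  · exact zero_le_one

lemma Wt_le_H (hH : ∀ x, 0 ≤ H x) (x : Plane) : Wt t T₀ H F E x ≤ H x := by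
  unfold Wt; split_ifs with h
  · exact le_refl _
  · exact hH x

lemma Wt_mono (hH : ∀ x, 0 ≤ H x) {E E' : Set Plane} (hEE : E ⊆ E') (x : Plane) :
    Wt t T₀ H F E x ≤ Wt t T₀ H F E' x := by
  unfold Wt; split_ifs with h1 h2
  · exact le_refl _
  · exact absurd ⟨hEE h1.1, h1.2⟩ h2
  · exact hH x
  · exact le_refl _

lemma Wt_measurable (hHm : Measurable H) (hFm : Measurable F) (hT₀ : MeasurableSet T₀)
    (hE : MeasurableSet E) : Measurable (Wt t T₀ H F E) := by
  unfold Wt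
  exact Measurable.ite (hE.inter ((measurableSet_lt measurable_const hFm).inter hT₀))
    hHm measurable_const

lemma Wt_indicator (x : Plane) (S : Set Plane) :
    ENNReal.ofReal (Wt t T₀ H F (E ∩ S) x)
      = S.indicator (fun y => ENNReal.ofReal (Wt t T₀ H F E y)) x := by
  unfold Wt
  simp only [Set.indicator, Set.mem_inter_iff]
  by_cases hxS : x ∈ S <;> by_cases hxE : x ∈ E <;>
    by_cases hxc : t < F x ∧ x ∈ T₀ <;> simp [hxS, hxE, hxc]

lemma Wt_le_indicator (hH1 : ∀ x, 0 ≤ H x) (x : Plane) :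
    ENNReal.ofReal (Wt t T₀ H F E x) ≤ T₀.indicator (fun y => ENNReal.ofReal (H y)) x := by
  unfold Wt
  simp only [Set.indicator]
  split_ifs with h1 h2
  · exact le_refl _
  · exact absurd h1.2.2 h2
  · exact ENNReal.ofReal_le_ofReal (hH1 x)
  · simp

end WtLemmas

section Key

variable {v : Plane} {α β : ℝ} {F H : Plane → ℝ}

/-- Step 0: `F ≤ ℳF(β)` a.e. on the support of any `α`-admissible weight. -/
lemma step0 (hβ : 0 < β) (hβα : β < α)
    (hFm : Measurable F) (hF0 : ∀ x, 0 ≤ F x)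
    (hHm : Measurable H) (hH01 : ∀ x, 0 ≤ H x ∧ H x ≤ 1)
    (hA0 : calA v α H ≠ 0) (hAt : calA v α H ≠ ⊤) (hs : MMaxT v β F ≠ ⊤) :
    ∀ᵐ x, H x = 0 ∨ F x ≤ (MMaxT v β F).toReal := by
  set A := calA v α H with hA
  set s := MMaxT v β F with hsdef
  set σ := s.toReal with hσ
  have hσ0 : 0 ≤ σ := ENNReal.toReal_nonneg
  have hα : 0 < α := hβ.trans hβα
  set c : ℝ := β / α with hcdef
  set a : ℝ := (α - β) / α with hadef
  have hc : 0 < c := div_pos hβ hα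
  have ha : 0 < a := div_pos (by linarith) hα
  have hca : c + a = 1 := by rw [hcdef, hadef]; field_simp; ring
  have hab : α * c = β := by rw [hcdef]; field_simp
  have hH0 : ∀ x, 0 ≤ H x := fun x => (hH01 x).1
  have hH1 : ∀ x, H x ≤ 1 := fun x => (hH01 x).2
  -- the key claim, for each level t > σ and each truncation n
  have key : ∀ t : ℝ, σ < t → ∀ n : ℕ,
      ∫⁻ x, ENNReal.ofReal (Wt t (MTtube v 0 ((n:ℝ)+1)) H F Set.univ x) = 0 := by
    intro t ht n
    have ht0 : 0 < t := lt_of_le_of_lt hσ0 ht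
    set R₀ : ℝ := (n:ℝ) + 1 with hR₀def
    have hR₀ : 1 ≤ R₀ := by have := Nat.cast_nonneg (α := ℝ) n; linarith
    have hR₀0 : (0:ℝ) ≤ R₀ := by linarith
    set T₀ : Set Plane := MTtube v 0 R₀ with hT₀def
    have hT₀ : MeasurableSet T₀ := tube_measurableSet v 0 R₀
    set m : Set Plane → ℝ≥0∞ := fun E => ∫⁻ x, ENNReal.ofReal (Wt t T₀ H F E x) with hmdef
    have hcalAα : ∀ E : Set Plane, calA v α (Wt t T₀ H F E) ≤ A :=
      fun E => calA_mono (Wt_le_H hH0)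
    -- restriction to a tube
    have hrestr : ∀ (E : Set Plane) (x₀ : Plane) (R : ℝ),
        ∫⁻ x in MTtube v x₀ R, ENNReal.ofReal (Wt t T₀ H F E x)
          = m (E ∩ MTtube v x₀ R) := by
      intro E x₀ R
      rw [hmdef]
      rw [← lintegral_indicator (tube_measurableSet v x₀ R)]
      exact (lintegral_congr fun x => Wt_indicator x (MTtube v x₀ R)).symm
    -- mass seed
    have hmass : ∀ E : Set Plane, m E ≤ A * ENNReal.ofReal (R₀ ^ α) := by
      intro E
      calc m E ≤ ∫⁻ x, T₀.indicator (fun y => ENNReal.ofReal (H y)) x :=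
            lintegral_mono (Wt_le_indicator hH0)
        _ = ∫⁻ x in T₀, ENNReal.ofReal (H x) := lintegral_indicator hT₀ _
        _ ≤ A * ENNReal.ofReal (R₀ ^ α) := lintegral_tube_le α H hR₀
    -- iteration step
    have hstep : ∀ K : ℝ≥0∞, K ≠ ⊤ → (∀ E : Set Plane, MeasurableSet E → m E ≤ A * K) →
        ∀ E : Set Plane, MeasurableSet E → m E ≤ A * K ^ a := by
      intro K hKt hK E hE
      have htube : ∀ (x₀ : Plane) (R : ℝ), 1 ≤ R →
          ∫⁻ x in MTtube v x₀ R, ENNReal.ofReal (Wt t T₀ H F E x) ≤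
            (A * K ^ a) * ENNReal.ofReal (R ^ β) := by
        intro x₀ R hR
        have h1 : ∫⁻ x in MTtube v x₀ R, ENNReal.ofReal (Wt t T₀ H F E x)
            ≤ A * ENNReal.ofReal (R ^ α) :=
          (lintegral_tube_le α (Wt t T₀ H F E) hR).trans (mul_le_mul_left (hcalAα E) _)
        have h2 : ∫⁻ x in MTtube v x₀ R, ENNReal.ofReal (Wt t T₀ H F E x) ≤ A * K := by
          rw [hrestr E x₀ R]
          exact hK _ (hE.inter (tube_measurableSet v x₀ R))
        calc ∫⁻ x in MTtube v x₀ R, ENNReal.ofReal (Wt t T₀ H F E x)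
            ≤ min (A * ENNReal.ofReal (R ^ α)) (A * K) := le_min h1 h2
          _ ≤ (A * ENNReal.ofReal (R ^ α)) ^ c * (A * K) ^ a :=
              min_le_rpow_mul_rpow _ _ hc ha hca
          _ = A * K ^ a * ENNReal.ofReal (R ^ β) :=
              iterGeo hA0 hAt hc ha hca (by linarith : (0:ℝ) ≤ R) hab
      have hcA : calA v β (Wt t T₀ H F E) ≤ A * K ^ a := calA_le htube
      have hfin : A * K ^ a ≠ ⊤ :=
        ENNReal.mul_ne_top hAt (ENNReal.rpow_ne_top_of_nonneg ha.le hKt)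
      have hcheb : ∫⁻ x, ENNReal.ofReal (F x) ^ β * ENNReal.ofReal (Wt t T₀ H F E x)
          ≤ (A * K ^ a) * s ^ β :=
        le_trans (cheb hβ F hF0 (Wt_measurable hHm hFm hT₀ hE) (Wt_nonneg hH0)
          (Wt_le_one hH1) (ne_top_of_le_ne_top hfin hcA))
          (mul_le_mul_left hcA _)
      set τ : ℝ≥0∞ := ENNReal.ofReal t with hτdef
      have hsτ : s ≤ τ := by
        rw [hτdef, ← ENNReal.ofReal_toReal hs]
        exact ENNReal.ofReal_le_ofReal ht.le
      have hlow : τ ^ β * m E ≤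
          ∫⁻ x, ENNReal.ofReal (F x) ^ β * ENNReal.ofReal (Wt t T₀ H F E x) := by
        rw [hmdef, ← lintegral_const_mul _
          ((Wt_measurable hHm hFm hT₀ hE).ennreal_ofReal)]
        apply lintegral_mono
        intro x
        show τ ^ β * ENNReal.ofReal (Wt t T₀ H F E x) ≤
          ENNReal.ofReal (F x) ^ β * ENNReal.ofReal (Wt t T₀ H F E x)
        unfold Wt
        split_ifs with h
        · exact mul_le_mul_left
            (ENNReal.rpow_le_rpow (ENNReal.ofReal_le_ofReal h.2.1.le) hβ.le) _
        · simp
      have hchain : m E * τ ^ β ≤ (A * K ^ a) * τ ^ β := by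
        rw [mul_comm]
        calc τ ^ β * m E ≤ (A * K ^ a) * s ^ β := hlow.trans hcheb
          _ ≤ (A * K ^ a) * τ ^ β := mul_le_mul_right (ENNReal.rpow_le_rpow hsτ hβ.le) _
      have hτ0 : τ ^ β ≠ 0 := by
        simp only [ne_eq, ENNReal.rpow_eq_zero_iff, not_or, not_and]
        exact ⟨fun h => absurd h (by simp [hτdef, ht0]),
          fun h => absurd h ENNReal.ofReal_ne_top⟩
      have hτt : τ ^ β ≠ ⊤ := ENNReal.rpow_ne_top_of_nonneg hβ.le ENNReal.ofReal_ne_top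
      exact (ENNReal.mul_le_mul_iff_left hτ0 hτt).mp hchain
    -- induction
    set K₀ : ℝ≥0∞ := ENNReal.ofReal (R₀ ^ α) with hK₀def
    have hind : ∀ j : ℕ, ∀ E : Set Plane, MeasurableSet E → m E ≤ A * K₀ ^ (a ^ j) := by
      intro j
      induction j with
      | zero => intro E _; simpa using hmass E
      | succ j ih =>
          have h1 := hstep (K₀ ^ (a ^ j))
            (ENNReal.rpow_ne_top_of_nonneg (pow_nonneg ha.le j) ENNReal.ofReal_ne_top) ih
          intro E hE
          have h2 := h1 E hE
          rwa [← ENNReal.rpow_mul, ← pow_succ] at h2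
    -- limit: m univ ≤ A
    have hMA : m Set.univ ≤ A := by
      have hb0 : (0:ℝ) < R₀ ^ α := Real.rpow_pos_of_pos (by linarith) α
      have htend0 : Filter.Tendsto (fun j : ℕ => a ^ j) Filter.atTop (nhds 0) :=
        tendsto_pow_atTop_nhds_zero_of_lt_one ha.le
          (by rw [hadef, div_lt_one hα]; linarith)
      have htend1 : Filter.Tendsto (fun j : ℕ => (R₀ ^ α) ^ (a ^ j)) Filter.atTop (nhds 1) := by
        have heq : ∀ j : ℕ, (R₀ ^ α) ^ (a ^ j) = Real.exp (Real.log (R₀ ^ α) * a ^ j) := by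
          intro j; rw [Real.rpow_def_of_pos hb0]
        simp only [heq]
        have h2 : Filter.Tendsto (fun j : ℕ => Real.log (R₀ ^ α) * a ^ j)
            Filter.atTop (nhds 0) := by
          simpa using htend0.const_mul (Real.log (R₀ ^ α))
        simpa [Function.comp_def] using (Real.continuous_exp.tendsto 0).comp h2
      have htend2 : Filter.Tendsto (fun j : ℕ => A * K₀ ^ (a ^ j)) Filter.atTop
          (nhds (A * 1)) := by
        apply ENNReal.Tendsto.const_mul _ (Or.inr hAt)
        have heq : ∀ j : ℕ, K₀ ^ (a ^ j) = ENNReal.ofReal ((R₀ ^ α) ^ (a ^ j)) := by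
          intro j
          rw [hK₀def, ENNReal.ofReal_rpow_of_nonneg (Real.rpow_nonneg hR₀0 α)
            (pow_nonneg ha.le j)]
        simp only [heq]
        simpa [Function.comp_def] using (ENNReal.continuous_ofReal.tendsto 1).comp htend1
      have := ge_of_tendsto htend2
        (Filter.Eventually.of_forall fun j => hind j Set.univ MeasurableSet.univ)
      simpa using this
    -- refined step: m univ = 0
    have htube2 : ∀ (x₀ : Plane) (R : ℝ), 1 ≤ R →
        ∫⁻ x in MTtube v x₀ R, ENNReal.ofReal (Wt t T₀ H F Set.univ x) ≤
          m Set.univ * ENNReal.ofReal (R ^ β) := by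
      intro x₀ R hR
      rw [hrestr]
      calc m (Set.univ ∩ MTtube v x₀ R) ≤ m Set.univ :=
            lintegral_mono fun x => ENNReal.ofReal_le_ofReal
              (Wt_mono hH0 Set.inter_subset_left x)
        _ ≤ m Set.univ * ENNReal.ofReal (R ^ β) :=
            le_mul_of_one_le_right' (ENNReal.one_le_ofReal.mpr (Real.one_le_rpow hR hβ.le))
    have hcA2 : calA v β (Wt t T₀ H F Set.univ) ≤ m Set.univ := calA_le htube2
    have hMt : m Set.univ ≠ ⊤ := ne_top_of_le_ne_top hAt hMA
    have hcheb2 : ∫⁻ x, ENNReal.ofReal (F x) ^ β * ENNReal.ofReal (Wt t T₀ H F Set.univ x)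
        ≤ m Set.univ * s ^ β :=
      le_trans (cheb hβ F hF0 (Wt_measurable hHm hFm hT₀ MeasurableSet.univ)
        (Wt_nonneg hH0) (Wt_le_one hH1) (ne_top_of_le_ne_top hMt hcA2))
        (mul_le_mul_left hcA2 _)
    set τ : ℝ≥0∞ := ENNReal.ofReal t with hτdef
    have hlow2 : τ ^ β * m Set.univ ≤
        ∫⁻ x, ENNReal.ofReal (F x) ^ β * ENNReal.ofReal (Wt t T₀ H F Set.univ x) := by
      rw [hmdef, ← lintegral_const_mul _
        (Measurable.ennreal_ofReal (Wt_measurable hHm hFm hT₀ MeasurableSet.univ))]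
      apply lintegral_mono
      intro x
      show τ ^ β * ENNReal.ofReal (Wt t T₀ H F Set.univ x) ≤
        ENNReal.ofReal (F x) ^ β * ENNReal.ofReal (Wt t T₀ H F Set.univ x)
      unfold Wt
      split_ifs with h
      · exact mul_le_mul_left
          (ENNReal.rpow_le_rpow (ENNReal.ofReal_le_ofReal h.2.1.le) hβ.le) _
      · simp
    show m Set.univ = 0
    by_contra hM0
    have hfinal : m Set.univ * τ ^ β ≤ m Set.univ * s ^ β := by
      rw [mul_comm (m Set.univ) (τ ^ β)]
      exact hlow2.trans hcheb2
    have h1 : τ ^ β ≤ s ^ β := (ENNReal.mul_le_mul_iff_right hM0 hMt).mp hfinal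
    have h2 : s ^ β < τ ^ β := by
      apply ENNReal.rpow_lt_rpow _ hβ
      rw [hτdef, ← ENNReal.ofReal_toReal hs]
      exact (ENNReal.ofReal_lt_ofReal_iff ht0).mpr ht
    exact absurd h1 (not_le.mpr h2)
  -- aggregate: a.e. x, H x = 0 ∨ F x ≤ σ
  have key2 : ∀ (k n : ℕ), ∀ᵐ x,
      ¬((σ + 1/((k:ℝ)+1)) < F x ∧ x ∈ MTtube v 0 ((n:ℝ)+1) ∧ H x ≠ 0) := by
    intro k n
    have htk : σ < σ + 1/((k:ℝ)+1) := by
      have h : (0:ℝ) < 1/((k:ℝ)+1) := by positivity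
      linarith
    have h1 := key _ htk n
    have h2 := (lintegral_eq_zero_iff
      (Wt_measurable hHm hFm (tube_measurableSet v 0 _) MeasurableSet.univ).ennreal_ofReal).mp h1
    filter_upwards [h2] with x hx
    rintro ⟨hFx, hT, hHx⟩
    simp only [Wt, Set.mem_univ, hFx, hT, and_self, true_and, if_true,
      Pi.zero_apply, ENNReal.ofReal_eq_zero] at hx
    exact hHx (le_antisymm hx (hH01 x).1)
  have key3 : ∀ᵐ x, ∀ (k n : ℕ),
      ¬((σ + 1/((k:ℝ)+1)) < F x ∧ x ∈ MTtube v 0 ((n:ℝ)+1) ∧ H x ≠ 0) := by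
    rw [ae_all_iff]
    intro k
    rw [ae_all_iff]
    exact key2 k
  filter_upwards [key3] with x hx
  by_cases hHx : H x = 0
  · exact Or.inl hHx
  · right
    by_contra hFx
    push_neg at hFx
    obtain ⟨k, hk⟩ := exists_nat_one_div_lt (by linarith : 0 < F x - σ)
    obtain ⟨n, hn⟩ := tube_exhaust v x
    exact hx k n ⟨by linarith, hn, hHx⟩

end Key

lemma rpow_add_split (x : ℝ≥0∞) {b d : ℝ} (hb : 0 < b) (hd : 0 < d) :
    x ^ b * x ^ d = x ^ (b + d) := by
  rcases eq_or_ne x 0 with rfl | h0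
  · rw [ENNReal.zero_rpow_of_pos hb, ENNReal.zero_rpow_of_pos hd,
      ENNReal.zero_rpow_of_pos (by linarith), mul_zero]
  rcases eq_or_ne x ⊤ with rfl | ht
  · rw [ENNReal.top_rpow_of_pos hb, ENNReal.top_rpow_of_pos hd,
      ENNReal.top_rpow_of_pos (by linarith), top_mul_top]
  · exact (ENNReal.rpow_add b d h0 ht).symm

section KeyMain

variable {v : Plane} {α β : ℝ} {F H : Plane → ℝ}

lemma keyMain (hβ : 0 < β) (hβα : β < α)
    (hFm : Measurable F) (hF0 : ∀ x, 0 ≤ F x)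
    (hHm : Measurable H) (hH01 : ∀ x, 0 ≤ H x ∧ H x ≤ 1)
    (hA0 : calA v α H ≠ 0) (hAt : calA v α H ≠ ⊤) :
    ∫⁻ x, ENNReal.ofReal (F x) ^ α * ENNReal.ofReal (H x)
      ≤ calA v α H * (MMaxT v β F) ^ α := by
  have hα : 0 < α := hβ.trans hβα
  have hαβ : 0 < α - β := by linarith
  set A := calA v α H with hAdef
  set s := MMaxT v β F with hsdef
  rcases eq_or_ne s ⊤ with hstop | hs
  · rw [hstop, ENNReal.top_rpow_of_pos hα, ENNReal.mul_top hA0]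
    exact le_top
  have hH0 : ∀ x, 0 ≤ H x := fun x => (hH01 x).1
  have hH1 : ∀ x, H x ≤ 1 := fun x => (hH01 x).2
  have hae := step0 hβ hβα hFm hF0 hHm hH01 hA0 hAt hs
  set σ := s.toReal with hσdef
  rcases eq_or_ne s 0 with hs0 | hs0
  · have hz : ∫⁻ x, ENNReal.ofReal (F x) ^ α * ENNReal.ofReal (H x) = 0 := by
      rw [← lintegral_zero]
      apply lintegral_congr_ae
      filter_upwards [hae] with x hx
      rcases hx with h | h
      · rw [h]; simp
      · have hσ0 : σ = 0 := by rw [hσdef, hs0]; simp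
        have hFx : F x = 0 := le_antisymm (hσ0 ▸ h) (hF0 x)
        rw [hFx]
        simp [ENNReal.zero_rpow_of_pos hα]
    rw [hz]
    exact zero_le
  -- main case : 0 < s < ⊤
  have hσpos : 0 < σ := ENNReal.toReal_pos hs0 hs
  have hs' : s = ENNReal.ofReal σ := (ENNReal.ofReal_toReal hs).symm
  set c : ℝ := β / α with hcdef
  set a : ℝ := (α - β) / α with hadef
  have hc : 0 < c := div_pos hβ hα
  have hc1 : c < 1 := by rw [hcdef, div_lt_one hα]; exact hβα
  have ha : 0 < a := div_pos hαβ hα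
  have hca : c + a = 1 := by rw [hcdef, hadef]; field_simp; ring
  have hab : α * c = β := by rw [hcdef]; field_simp
  set G : Plane → ℝ := fun x => min (F x) σ with hGdef
  have hGm : Measurable G := hFm.min measurable_const
  have hG0 : ∀ x, 0 ≤ G x := fun x => le_min (hF0 x) hσpos.le
  have hGσ : ∀ x, G x ≤ σ := fun x => min_le_right _ _
  have hGs : ∀ x, ENNReal.ofReal (G x) ≤ s := fun x => by
    rw [hs']; exact ENNReal.ofReal_le_ofReal (hGσ x)
  have hGF : ∀ x, ENNReal.ofReal (G x) ≤ ENNReal.ofReal (F x) :=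
    fun x => ENNReal.ofReal_le_ofReal (min_le_left _ _)
  have hsα0 : s ^ α ≠ 0 := by
    simp only [ne_eq, ENNReal.rpow_eq_zero_iff, not_or, not_and]
    exact ⟨fun h => absurd h hs0, fun h => absurd h hs⟩
  have hsαt : s ^ α ≠ ⊤ := ENNReal.rpow_ne_top_of_nonneg hα.le hs
  have hsβαt : s ^ (α - β) ≠ ⊤ := ENNReal.rpow_ne_top_of_nonneg hαβ.le hs
  have hsβα0 : s ^ (α - β) ≠ 0 := by
    simp only [ne_eq, ENNReal.rpow_eq_zero_iff, not_or, not_and]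
    exact ⟨fun h => absurd h hs0, fun h => absurd h hs⟩
  -- the truncated main estimate
  have main : ∀ n : ℕ,
      ∫⁻ x, ENNReal.ofReal (G x) ^ α *
        ENNReal.ofReal (Wt (-1) (MTtube v 0 ((n:ℝ)+1)) H F Set.univ x) ≤ A * s ^ α := by
    intro n
    set R₀ : ℝ := (n:ℝ) + 1 with hR₀def
    have hR₀ : 1 ≤ R₀ := by have := Nat.cast_nonneg (α := ℝ) n; linarith
    have hR₀0 : (0:ℝ) ≤ R₀ := by linarith
    set T₀ : Set Plane := MTtube v 0 R₀ with hT₀def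
    have hT₀ : MeasurableSet T₀ := tube_measurableSet v 0 R₀
    set J : Set Plane → ℝ≥0∞ := fun E =>
      ∫⁻ x, ENNReal.ofReal (G x) ^ α * ENNReal.ofReal (Wt (-1) T₀ H F E x) with hJdef
    have hcalAα : ∀ E : Set Plane, calA v α (Wt (-1) T₀ H F E) ≤ A :=
      fun E => calA_mono (Wt_le_H hH0)
    -- restriction identity
    have hrestr : ∀ (E : Set Plane) (x₀ : Plane) (R : ℝ),
        ∫⁻ x in MTtube v x₀ R, ENNReal.ofReal (G x) ^ α *
          ENNReal.ofReal (Wt (-1) T₀ H F E x) = J (E ∩ MTtube v x₀ R) := by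
      intro E x₀ R
      rw [hJdef, ← lintegral_indicator (tube_measurableSet v x₀ R)]
      apply lintegral_congr
      intro x
      rw [Wt_indicator x (MTtube v x₀ R)]
      by_cases hx : x ∈ MTtube v x₀ R <;> simp [Set.indicator, hx]
    -- mass bound
    have hmass : ∀ E : Set Plane, ∫⁻ x, ENNReal.ofReal (Wt (-1) T₀ H F E x)
        ≤ A * ENNReal.ofReal (R₀ ^ α) := by
      intro E
      calc ∫⁻ x, ENNReal.ofReal (Wt (-1) T₀ H F E x)
          ≤ ∫⁻ x, T₀.indicator (fun y => ENNReal.ofReal (H y)) x :=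
            lintegral_mono (Wt_le_indicator hH0)
        _ = ∫⁻ x in T₀, ENNReal.ofReal (H x) := lintegral_indicator hT₀ _
        _ ≤ A * ENNReal.ofReal (R₀ ^ α) := lintegral_tube_le α H hR₀
    -- seed
    have hseed : ∀ E : Set Plane, MeasurableSet E →
        J E ≤ A * ENNReal.ofReal (R₀ ^ α) * s ^ α := by
      intro E hE
      calc J E ≤ ∫⁻ x, s ^ α * ENNReal.ofReal (Wt (-1) T₀ H F E x) :=
            lintegral_mono fun x =>
              mul_le_mul_left (ENNReal.rpow_le_rpow (hGs x) hα.le) _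
        _ = s ^ α * ∫⁻ x, ENNReal.ofReal (Wt (-1) T₀ H F E x) :=
            lintegral_const_mul _ (Wt_measurable hHm hFm hT₀ hE).ennreal_ofReal
        _ ≤ s ^ α * (A * ENNReal.ofReal (R₀ ^ α)) := mul_le_mul_right (hmass E) _
        _ = A * ENNReal.ofReal (R₀ ^ α) * s ^ α := by ring
    -- iteration step
    have hstep : ∀ K : ℝ≥0∞, K ≠ ⊤ →
        (∀ E : Set Plane, MeasurableSet E → J E ≤ A * K * s ^ α) →
        ∀ E : Set Plane, MeasurableSet E → J E ≤ A * K ^ a * s ^ α := by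
      intro K hKt hK E hE
      have hUm : Measurable (Wt (-1) T₀ H F E) := Wt_measurable hHm hFm hT₀ hE
      -- the Hölder-weighted function
      set V : Plane → ℝ := fun x => Wt (-1) T₀ H F E x * (G x / σ) ^ (α - β) with hVdef
      have hV0 : ∀ x, 0 ≤ V x := fun x =>
        mul_nonneg (Wt_nonneg hH0 x) (Real.rpow_nonneg (div_nonneg (hG0 x) hσpos.le) _)
      have hV1 : ∀ x, V x ≤ 1 := by
        intro x
        have h1 : (G x / σ) ^ (α - β) ≤ 1 :=
          Real.rpow_le_one (div_nonneg (hG0 x) hσpos.le)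
            ((div_le_one hσpos).mpr (hGσ x)) hαβ.le
        calc V x ≤ 1 * ((G x / σ) ^ (α - β)) :=
              mul_le_mul_of_nonneg_right (Wt_le_one hH1 x)
                (Real.rpow_nonneg (div_nonneg (hG0 x) hσpos.le) _)
          _ ≤ 1 := by rw [one_mul]; exact h1
      have hVm : Measurable V :=
        hUm.mul ((hGm.div_const σ).pow measurable_const)
      have hofV : ∀ x, ENNReal.ofReal (V x) =
          ENNReal.ofReal (Wt (-1) T₀ H F E x) *
            (ENNReal.ofReal (G x) / s) ^ (α - β) := by
        intro x
        rw [hVdef]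
        rw [ENNReal.ofReal_mul (Wt_nonneg hH0 x)]
        congr 1
        rw [← ENNReal.ofReal_rpow_of_nonneg (div_nonneg (hG0 x) hσpos.le) hαβ.le,
          ENNReal.ofReal_div_of_pos hσpos, ← hs']
      -- tube bound via Hölder
      have htube : ∀ (x₀ : Plane) (R : ℝ), 1 ≤ R →
          ∫⁻ x in MTtube v x₀ R, ENNReal.ofReal (V x) ≤
            (A * K ^ a) * ENNReal.ofReal (R ^ β) := by
        intro x₀ R hR
        set μT := volume.restrict (MTtube v x₀ R) with hμT
        have hpq : Real.HolderConjugate (1/c) (1/a) :=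
          Real.holderConjugate_iff.mpr ⟨one_lt_one_div hc hc1, by rw [one_div, one_div, inv_inv, inv_inv]; exact hca⟩
        set u : Plane → ℝ≥0∞ := fun x => ENNReal.ofReal (Wt (-1) T₀ H F E x) with hudef
        have hum : Measurable u := hUm.ennreal_ofReal
        set q : Plane → ℝ≥0∞ := fun x => (ENNReal.ofReal (G x) / s) ^ (α - β) with hqdef
        have hqm : Measurable q := (hGm.ennreal_ofReal.div measurable_const).pow
          measurable_const
        have hfg : (fun x => u x * q x) =
            (fun x => u x ^ c) * (fun x => u x ^ a * q x) := by
          funext x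
          have hx := rpow_split (u x) hc ha hca
          simp only [Pi.mul_apply]
          rw [← mul_assoc, ← hx]
        have hfm : AEMeasurable (fun x => u x ^ c) μT :=
          (hum.pow measurable_const).aemeasurable
        have hgm : AEMeasurable (fun x => u x ^ a * q x) μT :=
          ((hum.pow measurable_const).mul hqm).aemeasurable
        have hHold := ENNReal.lintegral_mul_le_Lp_mul_Lq μT hpq hfm hgm
        rw [← hfg] at hHold
        have hf1 : (fun x => (u x ^ c) ^ (1/c)) = u := by
          funext x
          rw [← ENNReal.rpow_mul, mul_one_div_cancel hc.ne', ENNReal.rpow_one]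
        have hg1 : (fun x => (u x ^ a * q x) ^ (1/a)) =
            fun x => u x * (ENNReal.ofReal (G x) / s) ^ α := by
          funext x
          rw [ENNReal.mul_rpow_of_nonneg _ _ (le_of_lt (by positivity : (0:ℝ) < 1/a)),
            ← ENNReal.rpow_mul, mul_one_div_cancel ha.ne', ENNReal.rpow_one, hqdef,
            ← ENNReal.rpow_mul,
            (show (α - β) * (1/a) = α by rw [hadef]; field_simp)]
        have hHold2 : ∫⁻ x, u x * q x ∂μT ≤
            (∫⁻ x, u x ∂μT) ^ c * (∫⁻ x, u x * (ENNReal.ofReal (G x) / s) ^ α ∂μT) ^ a := by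
          calc ∫⁻ x, u x * q x ∂μT
              ≤ (∫⁻ x, (u x ^ c) ^ (1/c) ∂μT) ^ (1/(1/c)) *
                (∫⁻ x, (u x ^ a * q x) ^ (1/a) ∂μT) ^ (1/(1/a)) := hHold
            _ = (∫⁻ x, u x ∂μT) ^ c * (∫⁻ x, u x *
                (ENNReal.ofReal (G x) / s) ^ α ∂μT) ^ a := by
                rw [hf1, hg1, one_div_one_div, one_div_one_div]
        have hb1 : ∫⁻ x, u x ∂μT ≤ A * ENNReal.ofReal (R ^ α) :=
          (lintegral_tube_le α (Wt (-1) T₀ H F E) hR).trans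
            (mul_le_mul_left (hcalAα E) _)
        have hb2 : ∫⁻ x, u x * (ENNReal.ofReal (G x) / s) ^ α ∂μT ≤ A * K := by
          have hdiv : ∀ x, u x * (ENNReal.ofReal (G x) / s) ^ α =
              (ENNReal.ofReal (G x) ^ α * u x) * (s ^ α)⁻¹ := by
            intro x
            rw [ENNReal.div_rpow_of_nonneg _ _ hα.le, div_eq_mul_inv]
            ring
          calc ∫⁻ x, u x * (ENNReal.ofReal (G x) / s) ^ α ∂μT
              = ∫⁻ x, (ENNReal.ofReal (G x) ^ α * u x) * (s ^ α)⁻¹ ∂μT :=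
                lintegral_congr hdiv
            _ = (∫⁻ x, ENNReal.ofReal (G x) ^ α * u x ∂μT) * (s ^ α)⁻¹ :=
                lintegral_mul_const' _ _ (by simp [hsα0])
            _ = J (E ∩ MTtube v x₀ R) * (s ^ α)⁻¹ := by rw [← hrestr E x₀ R]
            _ ≤ (A * K * s ^ α) * (s ^ α)⁻¹ :=
                mul_le_mul_left (hK _ (hE.inter (tube_measurableSet v x₀ R))) _
            _ = A * K := by rw [mul_assoc, ENNReal.mul_inv_cancel hsα0 hsαt, mul_one]
        calc ∫⁻ x in MTtube v x₀ R, ENNReal.ofReal (V x)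
            = ∫⁻ x, u x * q x ∂μT := lintegral_congr fun x => hofV x
          _ ≤ (∫⁻ x, u x ∂μT) ^ c * (∫⁻ x, u x *
              (ENNReal.ofReal (G x) / s) ^ α ∂μT) ^ a := hHold2
          _ ≤ (A * ENNReal.ofReal (R ^ α)) ^ c * (A * K) ^ a :=
              mul_le_mul' (ENNReal.rpow_le_rpow hb1 hc.le) (ENNReal.rpow_le_rpow hb2 ha.le)
          _ = A * K ^ a * ENNReal.ofReal (R ^ β) :=
              iterGeo hA0 hAt hc ha hca (by linarith : (0:ℝ) ≤ R) hab
      have hcA : calA v β V ≤ A * K ^ a := calA_le htube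
      have hfin : A * K ^ a ≠ ⊤ :=
        ENNReal.mul_ne_top hAt (ENNReal.rpow_ne_top_of_nonneg ha.le hKt)
      have hcheb : ∫⁻ x, ENNReal.ofReal (F x) ^ β * ENNReal.ofReal (V x)
          ≤ (A * K ^ a) * s ^ β :=
        le_trans (cheb hβ F hF0 hVm hV0 hV1 (ne_top_of_le_ne_top hfin hcA))
          (mul_le_mul_left hcA _)
      -- lower bound for the β-integral
      have hlow : J E * (s ^ (α - β))⁻¹ ≤
          ∫⁻ x, ENNReal.ofReal (F x) ^ β * ENNReal.ofReal (V x) := by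
        have hpt : ∀ x, (ENNReal.ofReal (G x) ^ α *
            ENNReal.ofReal (Wt (-1) T₀ H F E x)) * (s ^ (α - β))⁻¹ =
            ENNReal.ofReal (G x) ^ β * ENNReal.ofReal (V x) := by
          intro x
          rw [hofV x, ENNReal.div_rpow_of_nonneg _ _ hαβ.le, div_eq_mul_inv]
          have hGsplit : ENNReal.ofReal (G x) ^ β * ENNReal.ofReal (G x) ^ (α - β)
              = ENNReal.ofReal (G x) ^ α := by
            rw [rpow_add_split _ hβ hαβ]
            norm_num
          calc ENNReal.ofReal (G x) ^ α * ENNReal.ofReal (Wt (-1) T₀ H F E x) *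
                (s ^ (α - β))⁻¹
              = (ENNReal.ofReal (G x) ^ β * ENNReal.ofReal (G x) ^ (α - β)) *
                ENNReal.ofReal (Wt (-1) T₀ H F E x) * (s ^ (α - β))⁻¹ := by rw [hGsplit]
            _ = ENNReal.ofReal (G x) ^ β * (ENNReal.ofReal (Wt (-1) T₀ H F E x) *
                (ENNReal.ofReal (G x) ^ (α - β) * (s ^ (α - β))⁻¹)) := by ring
        calc J E * (s ^ (α - β))⁻¹
            = ∫⁻ x, (ENNReal.ofReal (G x) ^ α *
                ENNReal.ofReal (Wt (-1) T₀ H F E x)) * (s ^ (α - β))⁻¹ :=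
              (lintegral_mul_const' _ _ (by simp [hsβα0])).symm
          _ = ∫⁻ x, ENNReal.ofReal (G x) ^ β * ENNReal.ofReal (V x) :=
              lintegral_congr hpt
          _ ≤ ∫⁻ x, ENNReal.ofReal (F x) ^ β * ENNReal.ofReal (V x) :=
              lintegral_mono fun x =>
                mul_le_mul_left (ENNReal.rpow_le_rpow (hGF x) hβ.le) _
      have hfinal : J E * (s ^ (α - β))⁻¹ ≤ (A * K ^ a) * s ^ β := hlow.trans hcheb
      have : J E ≤ (A * K ^ a) * s ^ β * s ^ (α - β) := by
        calc J E = J E * (s ^ (α - β))⁻¹ * s ^ (α - β) := by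
              rw [mul_assoc, ENNReal.inv_mul_cancel hsβα0 hsβαt, mul_one]
          _ ≤ (A * K ^ a) * s ^ β * s ^ (α - β) := mul_le_mul_left hfinal _
      calc J E ≤ (A * K ^ a) * s ^ β * s ^ (α - β) := this
        _ = A * K ^ a * s ^ α := by
            rw [mul_assoc, rpow_add_split s hβ hαβ]
            norm_num
    -- induction
    set K₀ : ℝ≥0∞ := ENNReal.ofReal (R₀ ^ α) with hK₀def
    have hind : ∀ j : ℕ, ∀ E : Set Plane, MeasurableSet E →
        J E ≤ A * K₀ ^ (a ^ j) * s ^ α := by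
      intro j
      induction j with
      | zero => intro E hE; simpa using hseed E hE
      | succ j ih =>
          have h1 := hstep (K₀ ^ (a ^ j))
            (ENNReal.rpow_ne_top_of_nonneg (pow_nonneg ha.le j) ENNReal.ofReal_ne_top) ih
          intro E hE
          have h2 := h1 E hE
          rwa [← ENNReal.rpow_mul, ← pow_succ] at h2
    -- limit
    have hb0 : (0:ℝ) < R₀ ^ α := Real.rpow_pos_of_pos (by linarith) α
    have htend0 : Filter.Tendsto (fun j : ℕ => a ^ j) Filter.atTop (nhds 0) :=
      tendsto_pow_atTop_nhds_zero_of_lt_one ha.le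
        (by rw [hadef, div_lt_one hα]; linarith)
    have htend1 : Filter.Tendsto (fun j : ℕ => (R₀ ^ α) ^ (a ^ j)) Filter.atTop (nhds 1) := by
      have heq : ∀ j : ℕ, (R₀ ^ α) ^ (a ^ j) = Real.exp (Real.log (R₀ ^ α) * a ^ j) := by
        intro j; rw [Real.rpow_def_of_pos hb0]
      simp only [heq]
      have h2 : Filter.Tendsto (fun j : ℕ => Real.log (R₀ ^ α) * a ^ j)
          Filter.atTop (nhds 0) := by
        simpa using htend0.const_mul (Real.log (R₀ ^ α))
      simpa [Function.comp_def] using (Real.continuous_exp.tendsto 0).comp h2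
    have htend2 : Filter.Tendsto (fun j : ℕ => A * K₀ ^ (a ^ j) * s ^ α) Filter.atTop
        (nhds (A * 1 * s ^ α)) := by
      apply ENNReal.Tendsto.mul_const _ (Or.inr hsαt)
      apply ENNReal.Tendsto.const_mul _ (Or.inr hAt)
      have heq : ∀ j : ℕ, K₀ ^ (a ^ j) = ENNReal.ofReal ((R₀ ^ α) ^ (a ^ j)) := by
        intro j
        rw [hK₀def, ENNReal.ofReal_rpow_of_nonneg (Real.rpow_nonneg hR₀0 α)
          (pow_nonneg ha.le j)]
      simp only [heq]
      simpa [Function.comp_def] using (ENNReal.continuous_ofReal.tendsto 1).comp htend1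
    have hJfin := ge_of_tendsto htend2
      (Filter.Eventually.of_forall fun j => hind j Set.univ MeasurableSet.univ)
    calc ∫⁻ x, ENNReal.ofReal (G x) ^ α *
          ENNReal.ofReal (Wt (-1) T₀ H F Set.univ x) = J Set.univ := by rw [hJdef]
      _ ≤ A * 1 * s ^ α := hJfin
      _ = A * s ^ α := by rw [mul_one]
  -- pass to the limit in n
  have hGint : ∫⁻ x, ENNReal.ofReal (G x) ^ α * ENNReal.ofReal (H x) ≤ A * s ^ α := by
    have hmono : Monotone fun (n : ℕ) (x : Plane) => ENNReal.ofReal (G x) ^ α *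
        ENNReal.ofReal (Wt (-1) (MTtube v 0 ((n:ℝ)+1)) H F Set.univ x) := by
      intro n n' hnn x
      apply mul_le_mul_right
      apply ENNReal.ofReal_le_ofReal
      unfold Wt
      split_ifs with h1 h2
      · exact le_refl _
      · exfalso
        refine h2 ⟨trivial, h1.2.1, ?_⟩
        have hsub : MTtube v 0 ((n:ℝ)+1) ⊆ MTtube v 0 ((n':ℝ)+1) := by
          intro y hy
          simp only [MTtube, Set.mem_setOf_eq] at hy ⊢
          have hnc : (n:ℝ) ≤ (n':ℝ) := Nat.cast_le.mpr hnn
          linarith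
        exact hsub h1.2.2
      · exact hH0 x
      · exact le_refl _
    have hup : ∀ x, (⨆ n : ℕ, ENNReal.ofReal (G x) ^ α *
        ENNReal.ofReal (Wt (-1) (MTtube v 0 ((n:ℝ)+1)) H F Set.univ x)) =
        ENNReal.ofReal (G x) ^ α * ENNReal.ofReal (H x) := by
      intro x
      apply le_antisymm
      · apply iSup_le
        intro n
        apply mul_le_mul_right
        exact ENNReal.ofReal_le_ofReal (Wt_le_H hH0 x)
      · obtain ⟨n, hn⟩ := tube_exhaust v x
        have hcond : (-1:ℝ) < F x := lt_of_lt_of_le (by norm_num) (hF0 x)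
        have : ENNReal.ofReal (Wt (-1) (MTtube v 0 ((n:ℝ)+1)) H F Set.univ x)
            = ENNReal.ofReal (H x) := by
          unfold Wt
          rw [if_pos ⟨trivial, hcond, hn⟩]
        calc ENNReal.ofReal (G x) ^ α * ENNReal.ofReal (H x)
            = ENNReal.ofReal (G x) ^ α *
              ENNReal.ofReal (Wt (-1) (MTtube v 0 ((n:ℝ)+1)) H F Set.univ x) := by rw [this]
          _ ≤ ⨆ n : ℕ, ENNReal.ofReal (G x) ^ α *
              ENNReal.ofReal (Wt (-1) (MTtube v 0 ((n:ℝ)+1)) H F Set.univ x) :=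
            le_iSup (fun n : ℕ => ENNReal.ofReal (G x) ^ α *
              ENNReal.ofReal (Wt (-1) (MTtube v 0 ((n:ℝ)+1)) H F Set.univ x)) n
    calc ∫⁻ x, ENNReal.ofReal (G x) ^ α * ENNReal.ofReal (H x)
        = ∫⁻ x, ⨆ n : ℕ, ENNReal.ofReal (G x) ^ α *
            ENNReal.ofReal (Wt (-1) (MTtube v 0 ((n:ℝ)+1)) H F Set.univ x) :=
          lintegral_congr fun x => (hup x).symm
      _ = ⨆ n : ℕ, ∫⁻ x, ENNReal.ofReal (G x) ^ α *
            ENNReal.ofReal (Wt (-1) (MTtube v 0 ((n:ℝ)+1)) H F Set.univ x) :=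
          lintegral_iSup (fun n => (hGm.ennreal_ofReal.pow measurable_const).mul
            (Wt_measurable hHm hFm (tube_measurableSet v 0 _)
              MeasurableSet.univ).ennreal_ofReal) hmono
      _ ≤ A * s ^ α := iSup_le main
  -- replace G by F using step0
  calc ∫⁻ x, ENNReal.ofReal (F x) ^ α * ENNReal.ofReal (H x)
      = ∫⁻ x, ENNReal.ofReal (G x) ^ α * ENNReal.ofReal (H x) := by
        apply lintegral_congr_ae
        filter_upwards [hae] with x hx
        rcases hx with h | h
        · rw [h]; simp
        · have : G x = F x := min_eq_left h
          rw [this]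
    _ ≤ A * s ^ α := hGint

end KeyMain

/-- the tube-dimensional maximal inequality `ℳF(α) ≤ ℳF(β)`. -/
theorem stmt4 (v : Plane) (hv : v.1 ^ 2 + v.2 ^ 2 = 1)
    (α β : ℝ) (hβ : 0 < β) (hβα : β < α) (hα2 : α ≤ 2)
    (F : Plane → ℝ) (hFm : Measurable F) (hF0 : ∀ x, 0 ≤ F x) :
    MMaxT v α F ≤ MMaxT v β F := by
  have hα : 0 < α := hβ.trans hβα
  have hsup : (⨆ H ∈ {H : Plane → ℝ | Measurable H ∧ (∀ x, 0 ≤ H x ∧ H x ≤ 1) ∧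
      0 < calA v α H ∧ calA v α H < ⊤},
      (calA v α H)⁻¹ * ∫⁻ x, ENNReal.ofReal (F x ^ α * H x)) ≤ (MMaxT v β F) ^ α := by
    apply iSup₂_le
    intro H hH
    obtain ⟨hHm, hH01, hA0, hAt⟩ := hH
    have hint : ∫⁻ x, ENNReal.ofReal (F x ^ α * H x)
        = ∫⁻ x, ENNReal.ofReal (F x) ^ α * ENNReal.ofReal (H x) := by
      apply lintegral_congr
      intro x
      rw [ENNReal.ofReal_mul (Real.rpow_nonneg (hF0 x) α),
        ENNReal.ofReal_rpow_of_nonneg (hF0 x) hα.le]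
    rw [hint]
    have hkey := keyMain hβ hβα hFm hF0 hHm hH01 hA0.ne' hAt.ne
    calc (calA v α H)⁻¹ * ∫⁻ x, ENNReal.ofReal (F x) ^ α * ENNReal.ofReal (H x)
        ≤ (calA v α H)⁻¹ * (calA v α H * (MMaxT v β F) ^ α) := mul_le_mul_right hkey _
      _ = (MMaxT v β F) ^ α := by
          rw [← mul_assoc, ENNReal.inv_mul_cancel hA0.ne' hAt.ne, one_mul]
  conv_lhs => rw [MMaxT]
  calc (⨆ H ∈ {H : Plane → ℝ | Measurable H ∧ (∀ x, 0 ≤ H x ∧ H x ≤ 1) ∧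
      0 < calA v α H ∧ calA v α H < ⊤},
      (calA v α H)⁻¹ * ∫⁻ x, ENNReal.ofReal (F x ^ α * H x)) ^ (1/α)
      ≤ ((MMaxT v β F) ^ α) ^ (1/α) :=
        ENNReal.rpow_le_rpow hsup (by positivity)
    _ = MMaxT v β F := by
        rw [← ENNReal.rpow_mul, mul_one_div_cancel hα.ne', ENNReal.rpow_one]
end Key
end
end
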